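/- arXiv:2405.00584 — 6 statements merged into one kernel-verified Lean document; each statement's English description precedes it below -/
import Mathlib

section
/- Let k ≥ 2 and let C be a Type II Z_{2k}-code of length n. Let w ∈ (Z/2k)^n \ C be a vector every coordinate of which equals 0 or k, such that: if k is odd then n_k(w) is divisible by 4, and if k is even but not divisible by 4 then n_k(w) is even. Set C_0 = {v ∈ C : ⟨w,v⟩ = 0}. Then the subgroup C̃ = C_0 + ⟨w⟩ of (Z/2k)^n is a Type II Z_{2k}-code of length n, i.e., C̃ is self-dual and every codeword of C̃ has Euclidean weight divisible by 4k. -/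
open Finset

/-- Inner product of two vectors over `ZMod N`. -/
def innerZ {N n : ℕ} (x y : Fin n → ZMod N) : ZMod N := ∑ i, x i * y i

/-- Euclidean weight of a vector over `ZMod N`. -/
def euclWt {N n : ℕ} (x : Fin n → ZMod N) : ℕ :=
  ∑ i, min ((x i).val ^ 2) ((N - (x i).val) ^ 2)

/-- Number of coordinates of `x` equal to `a`. -/
def cntEq {N n : ℕ} (a : ZMod N) (x : Fin n → ZMod N) : ℕ :=
  (Finset.univ.filter fun j => x j = a).card

/-- A code is self-dual if it equals its dual. -/
def IsSelfDual {N n : ℕ} (C : AddSubgroup (Fin n → ZMod N)) : Prop :=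
  ∀ x, x ∈ C ↔ ∀ y ∈ C, innerZ x y = 0

/-- The subcode `{v ∈ C : ⟨w, v⟩ = 0}`. -/
def evenPart {N n : ℕ} (C : AddSubgroup (Fin n → ZMod N)) (w : Fin n → ZMod N) :
    AddSubgroup (Fin n → ZMod N) where
  carrier := {v | v ∈ C ∧ innerZ w v = 0}
  zero_mem' := ⟨C.zero_mem, by simp [innerZ]⟩
  add_mem' := by
    rintro a b ⟨ha, ha0⟩ ⟨hb, hb0⟩
    refine ⟨C.add_mem ha hb, ?_⟩
    have h : innerZ w (a + b) = innerZ w a + innerZ w b := by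
      simp [innerZ, mul_add, Finset.sum_add_distrib]
    rw [h, ha0, hb0, add_zero]
  neg_mem' := by
    rintro a ⟨ha, ha0⟩
    refine ⟨C.neg_mem ha, ?_⟩
    have h : innerZ w (-a) = - innerZ w a := by
      simp [innerZ]
    rw [h, ha0, neg_zero]

/-- `kv` extended to all of `ℕ` by zero. -/
def extk {m : ℕ} (kv : Fin m → ℕ) : ℕ → ℕ := fun t => if h : t < m then kv ⟨t, h⟩ else 0

/-- Partial sums `k_1 + ⋯ + k_j`. -/
def psum {m : ℕ} (kv : Fin m → ℕ) (j : ℕ) : ℕ := ∑ t ∈ Finset.range j, extk kv t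

/-- `G` is a generator matrix in standard form of type `(k_1, …, k_m)`. -/
def StandardForm {N : ℕ} {m n : ℕ} (kv : Fin m → ℕ)
    (G : Fin (psum kv m) → Fin n → ZMod N) : Prop :=
  psum kv m ≤ n ∧
  ∀ (j : Fin m) (r : Fin (psum kv m)), psum kv (j : ℕ) ≤ (r : ℕ) → (r : ℕ) < psum kv ((j : ℕ) + 1) →
    ∀ c : Fin n,
      (∀ l : Fin m, psum kv (l : ℕ) ≤ (c : ℕ) → (c : ℕ) < psum kv ((l : ℕ) + 1) →
        (l < j → G r c = 0) ∧
        (l = j → G r c = if (r : ℕ) = (c : ℕ) then (2 ^ (j : ℕ) : ZMod N) else 0)) ∧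
      ((psum kv m ≤ (c : ℕ) ∨
        ∃ l : Fin m, j < l ∧ psum kv (l : ℕ) ≤ (c : ℕ) ∧ (c : ℕ) < psum kv ((l : ℕ) + 1)) →
        ∃ a : ZMod N, G r c = 2 ^ (j : ℕ) * a)

/-- The minimum Euclidean weight over nonzero codewords equals `d`. -/
def minEuclWtIs {N n : ℕ} (C : AddSubgroup (Fin n → ZMod N)) (d : ℕ) : Prop :=
  (∀ x ∈ C, x ≠ 0 → d ≤ euclWt x) ∧ ∃ x ∈ C, x ≠ 0 ∧ euclWt x = d

/-- Coordinatewise reduction modulo 4. -/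
def res4 {n : ℕ} : (Fin n → ZMod 8) →+ (Fin n → ZMod 4) where
  toFun := fun x i => ZMod.castHom (by norm_num : (4 : ℕ) ∣ 8) (ZMod 4) (x i)
  map_zero' := by ext i; simp
  map_add' := by intro a b; ext i; exact map_add (ZMod.castHom (by norm_num) _) _ _

/-- Coordinatewise reduction modulo 2. -/
def res2 {n : ℕ} : (Fin n → ZMod 8) →+ (Fin n → ZMod 2) where
  toFun := fun x i => ZMod.castHom (by norm_num : (2 : ℕ) ∣ 8) (ZMod 2) (x i)
  map_zero' := by ext i; simp
  map_add' := by intro a b; ext i; exact map_add (ZMod.castHom (by norm_num) _) _ _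

/-- Hamming weight of a binary vector. -/
def hammingWt {n : ℕ} (y : Fin n → ZMod 2) : ℕ :=
  (Finset.univ.filter fun i => y i ≠ 0).card

/-- Equivalence of codes: a permutation of coordinates combined with sign changes. -/
def codeEquiv {N n : ℕ} (C C' : AddSubgroup (Fin n → ZMod N)) : Prop :=
  ∃ (σ : Equiv.Perm (Fin n)) (ε : Fin n → ZMod N),
    (∀ i, ε i = 1 ∨ ε i = -1) ∧
    ∀ y, y ∈ C' ↔ ∃ x ∈ C, y = fun i => ε i * x (σ i)

/-!
Write `C₀ = evenPart C w`. Since every coordinate of `w` is `0` or `k`, each `⟨w, y⟩` is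
2-torsion in `ℤ/2k`, hence `0` or `k`; as `w ∉ C = C^⊥`, some `v₀ ∈ C` has `⟨w, v₀⟩ = k`, and
`C₀` has index two in `C`. A vector orthogonal to `C₀` and to `w` pairs with `v₀` to `0` or to
`k`; in the first case it lies in `C₀`, in the second its difference with `w` does.

For weights, the Euclidean weight modulo `4k` is a quadratic form whose polar form is twice the
inner product: `wt(x + y) ≡ wt x + wt y (mod 4k)` whenever `⟨x, y⟩ = 0`, because `(a + 2km)² ≡ a²`
modulo `4k`. So the codewords of weight divisible by `4k` in a self-orthogonal code form a
subgroup, and it suffices that `wt w = n_k(w) k²` is divisible by `4k`, which is exactly what the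
parity conditions on `n_k(w)` give.
-/

section InnerProduct

variable {N n : ℕ}

theorem innerZ_comm (x y : Fin n → ZMod N) : innerZ x y = innerZ y x := dotProduct_comm x y

theorem innerZ_add_right (x y z : Fin n → ZMod N) : innerZ x (y + z) = innerZ x y + innerZ x z :=
  dotProduct_add x y z

theorem innerZ_neg_right (x y : Fin n → ZMod N) : innerZ x (-y) = -innerZ x y :=
  dotProduct_neg x y

theorem innerZ_sub_right (x y z : Fin n → ZMod N) : innerZ x (y - z) = innerZ x y - innerZ x z :=
  dotProduct_sub x y z

theorem innerZ_sub_left (x y z : Fin n → ZMod N) : innerZ (x - y) z = innerZ x z - innerZ y z :=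
  sub_dotProduct x y z

theorem two_mul_innerZ_eq_zero {w : Fin n → ZMod N} (hw : ∀ i, 2 * w i = 0)
    (y : Fin n → ZMod N) : 2 * innerZ w y = 0 := by
  simp [innerZ, mul_sum, ← mul_assoc, hw]

def IsSelfOrthogonal (D : AddSubgroup (Fin n → ZMod N)) : Prop :=
  ∀ x ∈ D, ∀ y ∈ D, innerZ x y = 0

theorem IsSelfDual.isSelfOrthogonal {D : AddSubgroup (Fin n → ZMod N)} (hD : IsSelfDual D) :
    IsSelfOrthogonal D :=
  fun x hx => (hD x).mp hx

theorem innerZ_eq_zero_of_mem_closure {S : Set (Fin n → ZMod N)} {x y : Fin n → ZMod N}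
    (hS : ∀ s ∈ S, innerZ x s = 0) (hy : y ∈ AddSubgroup.closure S) : innerZ x y = 0 := by
  induction hy using AddSubgroup.closure_induction with
  | mem s hs => exact hS s hs
  | zero => exact dotProduct_zero x
  | add y z _ _ hy hz => rw [innerZ_add_right, hy, hz, add_zero]
  | neg y _ hy => rw [innerZ_neg_right, hy, neg_zero]

theorem isSelfOrthogonal_closure {S : Set (Fin n → ZMod N)}
    (hS : ∀ s ∈ S, ∀ t ∈ S, innerZ s t = 0) : IsSelfOrthogonal (AddSubgroup.closure S) := by
  intro x hx y hy
  refine innerZ_eq_zero_of_mem_closure (fun t ht => ?_) hy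
  rw [innerZ_comm]
  exact innerZ_eq_zero_of_mem_closure (hS t ht) hx

end InnerProduct

theorem ZMod.two_mul_val_eq_of_two_mul_eq_zero {N : ℕ} [NeZero N] {a : ZMod N} (h : 2 * a = 0)
    (ha : a ≠ 0) : 2 * a.val = N := by
  have hpos : a.val ≠ 0 := (ZMod.val_ne_zero a).mpr ha
  refine Nat.eq_of_dvd_of_lt_two_mul (by omega) ?_ (by linarith [a.val_lt])
  rw [← ZMod.natCast_eq_zero_iff]
  push_cast
  rwa [ZMod.natCast_zmod_val]

theorem ZMod.eq_of_two_mul_eq_zero {N : ℕ} [NeZero N] {a b : ZMod N} (ha : 2 * a = 0)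
    (hb : 2 * b = 0) (ha₀ : a ≠ 0) (hb₀ : b ≠ 0) : a = b := by
  have := ZMod.two_mul_val_eq_of_two_mul_eq_zero ha ha₀
  have := ZMod.two_mul_val_eq_of_two_mul_eq_zero hb hb₀
  exact ZMod.val_injective N (by omega)

section Doubling

variable {N n : ℕ} {C : AddSubgroup (Fin n → ZMod N)} {w : Fin n → ZMod N}

theorem evenPart_sup_closure_eq :
    evenPart C w ⊔ AddSubgroup.closure {w} =
      AddSubgroup.closure ((evenPart C w : Set (Fin n → ZMod N)) ∪ {w}) := by
  rw [AddSubgroup.closure_union, AddSubgroup.closure_eq]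

theorem isSelfOrthogonal_evenPart_sup (hC : IsSelfOrthogonal C) (hww : innerZ w w = 0) :
    IsSelfOrthogonal (evenPart C w ⊔ AddSubgroup.closure {w}) := by
  rw [evenPart_sup_closure_eq]
  refine isSelfOrthogonal_closure ?_
  rintro s (hs | rfl) t (ht | rfl)
  · exact hC s hs.1 t ht.1
  · rw [innerZ_comm]
    exact hs.2
  · exact ht.2
  · exact hww

variable [NeZero N]

/-- On `C`, `⟨w, ·⟩` takes only the values `0` and `⟨w, v₀⟩`, so `C = C₀ ∪ (v₀ + C₀)`. -/
theorem IsSelfDual.mem_of_orthogonal_evenPart (hC : IsSelfDual C)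
    (hw2 : ∀ y ∈ C, 2 * innerZ w y = 0) {v₀ z : Fin n → ZMod N} (hv₀ : v₀ ∈ C)
    (hwv₀ : innerZ w v₀ ≠ 0) (hz : ∀ u ∈ evenPart C w, innerZ z u = 0)
    (hzv₀ : innerZ z v₀ = 0) : z ∈ C := by
  refine (hC z).mpr fun y hy => ?_
  by_cases hwy : innerZ w y = 0
  · exact hz y ⟨hy, hwy⟩
  · have hwy_eq : innerZ w y = innerZ w v₀ :=
      ZMod.eq_of_two_mul_eq_zero (hw2 y hy) (hw2 v₀ hv₀) hwy hwv₀
    have hyv₀ : y - v₀ ∈ evenPart C w :=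
      ⟨C.sub_mem hy hv₀, by rw [innerZ_sub_right, hwy_eq, sub_self]⟩
    simpa [innerZ_sub_right, hzv₀] using hz _ hyv₀

theorem IsSelfDual.evenPart_sup_closure (hC : IsSelfDual C) (hwC : w ∉ C)
    (hww : innerZ w w = 0) (hw2 : ∀ y ∈ C, 2 * innerZ w y = 0) :
    IsSelfDual (evenPart C w ⊔ AddSubgroup.closure {w}) := by
  have hself := isSelfOrthogonal_evenPart_sup hC.isSelfOrthogonal hww
  have hw : w ∈ evenPart C w ⊔ AddSubgroup.closure {w} :=
    AddSubgroup.mem_sup_right (AddSubgroup.subset_closure rfl)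
  refine fun x => ⟨fun hx y hy => hself x hx y hy, fun hx => ?_⟩
  obtain ⟨v₀, hv₀, hwv₀⟩ : ∃ v₀ ∈ C, innerZ w v₀ ≠ 0 := by
    by_contra! h
    exact hwC ((hC w).mpr h)
  have hxC₀ : ∀ u ∈ evenPart C w, innerZ x u = 0 :=
    fun u hu => hx u (AddSubgroup.mem_sup_left hu)
  have hxw : innerZ x w = 0 := hx w hw
  have hxv₀ : 2 * innerZ x v₀ = 0 := by
    rw [two_mul, ← innerZ_add_right]
    exact hxC₀ _ ⟨C.add_mem hv₀ hv₀, by rw [innerZ_add_right, ← two_mul, hw2 v₀ hv₀]⟩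
  by_cases h : innerZ x v₀ = 0
  · exact AddSubgroup.mem_sup_left
      ⟨hC.mem_of_orthogonal_evenPart hw2 hv₀ hwv₀ hxC₀ h, by rw [innerZ_comm, hxw]⟩
  · have hxv₀_eq : innerZ x v₀ = innerZ w v₀ :=
      ZMod.eq_of_two_mul_eq_zero hxv₀ (hw2 v₀ hv₀) h hwv₀
    have hxw_C : x - w ∈ C :=
      hC.mem_of_orthogonal_evenPart hw2 hv₀ hwv₀
        (fun u hu => by rw [innerZ_sub_left, hxC₀ u hu, hu.2, sub_zero])
        (by rw [innerZ_sub_left, hxv₀_eq, sub_self])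
    have hxw_C₀ : x - w ∈ evenPart C w :=
      ⟨hxw_C, by rw [innerZ_sub_right, hww, innerZ_comm, hxw, sub_zero]⟩
    simpa using add_mem (AddSubgroup.mem_sup_left hxw_C₀) hw

end Doubling

theorem Int.sq_modEq_sq_of_modEq {a b k : ℤ} (h : a ≡ b [ZMOD 2 * k]) :
    a ^ 2 ≡ b ^ 2 [ZMOD 4 * k] := by
  obtain ⟨m, hm⟩ := Int.modEq_iff_dvd.mp h
  exact Int.modEq_iff_dvd.mpr ⟨m * (a + k * m), by linear_combination (b + a + 2 * k * m) * hm⟩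

theorem euclWt_neg {N n : ℕ} [NeZero N] (x : Fin n → ZMod N) : euclWt (-x) = euclWt x := by
  refine sum_congr rfl fun i _ => ?_
  rw [Pi.neg_apply, ZMod.neg_val]
  split_ifs with h
  · simp [h]
  · rw [Nat.sub_sub_self (ZMod.val_lt _).le, min_comm]

theorem natCast_euclWt {N n : ℕ} [NeZero N] (x : Fin n → ZMod N) :
    (euclWt x : ZMod N) = innerZ x x := by
  rw [euclWt, innerZ, Nat.cast_sum]
  refine sum_congr rfl fun i _ => ?_
  rcases min_choice ((x i).val ^ 2) ((N - (x i).val) ^ 2) with h | h <;>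
    rw [h] <;> push_cast [(ZMod.val_lt (x i)).le] <;> simp [sq]

section Weight

variable {k n : ℕ} [NeZero k]

theorem euclWt_modEq_sum_sq (x : Fin n → ZMod (2 * k)) :
    (euclWt x : ℤ) ≡ ∑ i, ((x i).val : ℤ) ^ 2 [ZMOD 4 * k] := by
  rw [euclWt, Nat.cast_sum]
  refine Int.ModEq.sum fun i _ => ?_
  rcases min_choice ((x i).val ^ 2) ((2 * k - (x i).val) ^ 2) with h | h <;> rw [h]
  · push_cast
    rfl
  · push_cast [(ZMod.val_lt (x i)).le]
    rw [← neg_sq ((x i).val : ℤ)]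
    exact Int.sq_modEq_sq_of_modEq (Int.modEq_iff_dvd.mpr ⟨-1, by ring⟩)

theorem two_mul_dvd_sum_val_mul_val {x y : Fin n → ZMod (2 * k)} (h : innerZ x y = 0) :
    (2 * k : ℤ) ∣ ∑ i, ((x i).val : ℤ) * (y i).val := by
  have hcast : ((∑ i, ((x i).val : ℤ) * (y i).val : ℤ) : ZMod (2 * k)) = 0 := by
    simpa [innerZ, ZMod.natCast_zmod_val] using h
  exact_mod_cast (ZMod.intCast_zmod_eq_zero_iff_dvd _ (2 * k)).mp hcast

theorem euclWt_add_modEq {x y : Fin n → ZMod (2 * k)} (h : innerZ x y = 0) :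
    euclWt (x + y) ≡ euclWt x + euclWt y [MOD 4 * k] := by
  rw [← Int.natCast_modEq_iff]
  obtain ⟨m, hm⟩ := two_mul_dvd_sum_val_mul_val h
  have hval (i : Fin n) :
      (((x + y) i).val : ℤ) ^ 2 ≡ ((x i).val + (y i).val) ^ 2 [ZMOD 4 * k] :=
    Int.sq_modEq_sq_of_modEq <| by
      rw [Pi.add_apply, ZMod.val_add]
      push_cast
      exact Int.mod_modEq _ _
  push_cast
  calc (euclWt (x + y) : ℤ)
      ≡ ∑ i, (((x + y) i).val : ℤ) ^ 2 [ZMOD 4 * k] := euclWt_modEq_sum_sq _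
    _ ≡ ∑ i, ((x i).val + (y i).val : ℤ) ^ 2 [ZMOD 4 * k] := Int.ModEq.sum fun i _ => hval i
    _ = ∑ i, ((x i).val : ℤ) ^ 2 + ∑ i, ((y i).val : ℤ) ^ 2 + 4 * k * m := by
      simp only [add_sq, sum_add_distrib, mul_assoc, ← mul_sum, hm]
      ring
    _ ≡ ∑ i, ((x i).val : ℤ) ^ 2 + ∑ i, ((y i).val : ℤ) ^ 2 [ZMOD 4 * k] :=
      Int.modEq_add_fac_self
    _ ≡ euclWt x + euclWt y [ZMOD 4 * k] :=
      ((euclWt_modEq_sum_sq x).add (euclWt_modEq_sum_sq y)).symm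

theorem dvd_euclWt_of_mem_closure {S : Set (Fin n → ZMod (2 * k))}
    (hS : IsSelfOrthogonal (AddSubgroup.closure S)) (hwt : ∀ s ∈ S, 4 * k ∣ euclWt s)
    {x : Fin n → ZMod (2 * k)} (hx : x ∈ AddSubgroup.closure S) : 4 * k ∣ euclWt x := by
  induction hx using AddSubgroup.closure_induction with
  | mem s hs => exact hwt s hs
  | zero => simp [euclWt]
  | add x y hx hy ihx ihy =>
    exact ((euclWt_add_modEq (hS x hx y hy)).dvd_iff dvd_rfl).mpr (dvd_add ihx ihy)
  | neg x _ ih => rwa [euclWt_neg]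

theorem euclWt_eq_cntEq_mul_sq {w : Fin n → ZMod (2 * k)}
    (hw : ∀ i, w i = 0 ∨ w i = (k : ZMod (2 * k))) :
    euclWt w = cntEq (k : ZMod (2 * k)) w * k ^ 2 := by
  have hk : (k : ZMod (2 * k)).val = k := ZMod.val_natCast_of_lt (by have := NeZero.pos k; omega)
  have hk₀ : (k : ZMod (2 * k)) ≠ 0 := by
    rw [← ZMod.val_ne_zero, hk]
    exact NeZero.ne k
  rw [cntEq, card_eq_sum_ones, sum_mul, sum_filter, euclWt]
  refine sum_congr rfl fun i _ => ?_
  rcases hw i with h | h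
  · simp [h, hk₀.symm]
  · simp [h, hk, two_mul]

end Weight

theorem four_dvd_mul_of_parity {m k : ℕ} (hodd : Odd k → 4 ∣ m)
    (heven : Even k → ¬ 4 ∣ k → 2 ∣ m) : 4 ∣ m * k := by
  rcases Nat.even_or_odd k with hk | hk
  · by_cases h4 : 4 ∣ k
    · exact Dvd.dvd.mul_left h4 m
    · obtain ⟨a, rfl⟩ := heven hk h4
      obtain ⟨b, rfl⟩ := hk
      exact ⟨a * b, by ring⟩
  · exact Dvd.dvd.mul_right (hodd hk) k

/-- the doubling method produces a Type II `Z_{2k}`-code,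
i.e. the code `C̃ = C₀ ⊕ ⟨w⟩` is self-dual and all its Euclidean weights are
divisible by `4k`. -/
theorem doubling_typeII {k n : ℕ} (hk : 2 ≤ k)
    (C : AddSubgroup (Fin n → ZMod (2 * k)))
    (hsd : IsSelfDual C) (hT2 : ∀ x ∈ C, 4 * k ∣ euclWt x)
    (w : Fin n → ZMod (2 * k)) (hwC : w ∉ C)
    (hcoord : ∀ i, w i = 0 ∨ w i = (k : ZMod (2 * k)))
    (hodd : Odd k → 4 ∣ cntEq (k : ZMod (2 * k)) w)
    (heven : Even k → ¬ (4 ∣ k) → 2 ∣ cntEq (k : ZMod (2 * k)) w) :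
    IsSelfDual (evenPart C w ⊔ AddSubgroup.closure {w}) ∧
    ∀ x ∈ evenPart C w ⊔ AddSubgroup.closure {w}, 4 * k ∣ euclWt x := by
  have : NeZero k := ⟨by omega⟩
  have hw4k : 4 * k ∣ euclWt w := by
    rw [euclWt_eq_cntEq_mul_sq hcoord, sq, ← mul_assoc]
    exact Nat.mul_dvd_mul_right (four_dvd_mul_of_parity hodd heven) k
  have hww : innerZ w w = 0 := by
    rw [← natCast_euclWt, ZMod.natCast_eq_zero_iff]
    exact dvd_trans ⟨2, by ring⟩ hw4k
  have hw2 (i : Fin n) : 2 * w i = 0 := by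
    rcases hcoord i with h | h
    · simp [h]
    · rw [h]
      exact_mod_cast ZMod.natCast_self (2 * k)
  have hsd' := hsd.evenPart_sup_closure hwC hww fun y _ => two_mul_innerZ_eq_zero hw2 y
  refine ⟨hsd', fun x hx => ?_⟩
  rw [evenPart_sup_closure_eq] at hsd' hx
  refine dvd_euclWt_of_mem_closure hsd'.isSelfOrthogonal ?_ hx
  rintro s (hs | rfl)
  · exact hT2 s hs.1
  · exact hw4k
end

section
/- Let m ≥ 2 and let C be a Z_{2^m}-code of length n having a generator matrix in standard form of type (k_1,…,k_m); set K = k_1+⋯+k_m. Then for every vector w ∈ (Z/2^m)^n all of whose coordinates lie in {0, 2^{m−1}}, there exists a unique codeword c ∈ C all of whose coordinates lie in {0, 2^{m−1}} such that c_i = w_i for all i ∈ {1,…,K}. -/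
open Finset

/-
Let `β r` be the block of row `r`. On the first `K` columns the generator matrix is block upper
triangular with diagonal blocks `2 ^ β r • I`, and every entry of row `r` is divisible by
`2 ^ β r`. Hence if `∑ b r • G r` vanishes on the first `K` coordinates, induction on the block
shows `b r * 2 ^ β r = 0` for every `r`, so the combination is zero: a codeword is determined by
its first `K` coordinates. For existence, the half-rows `2 ^ (m - 1 - β r) • G r` have all
entries in `{0, 2 ^ (m - 1)}` and are unitriangular (with pivot `2 ^ (m - 1)`) on the first `K`
columns, so adding them one pivot at a time matches any prescribed `w`.
-/

section Echelon

variable {R ι κ α : Type*} [CommRing R] [Fintype ι] [DecidableEq ι] [LinearOrder α]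
  [WellFoundedLT α] {G : ι → κ → R} {e : ι → κ} {β : ι → α} {p : ι → R}

theorem mul_pivot_eq_zero_of_sum_mul_apply_eq_zero
    (hpiv : ∀ r s, β s ≤ β r → G r (e s) = if r = s then p r else 0)
    (hdvd : ∀ r c, p r ∣ G r c) {b : ι → R} (hb : ∀ s, ∑ r, b r * G r (e s) = 0)
    (r : ι) : b r * p r = 0 := by
  induction hr : β r using WellFoundedLT.induction generalizing r with
  | ind a ih =>
    calc b r * p r = ∑ r', b r' * G r' (e r) := by
          rw [Finset.sum_eq_single r]
          · rw [hpiv r r le_rfl, if_pos rfl]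
          · intro r' _ hne
            rcases lt_or_ge (β r') (β r) with hlt | hle
            · obtain ⟨d, hd⟩ := hdvd r' (e r)
              rw [hd, ← mul_assoc, ih _ (hr ▸ hlt) r' rfl, zero_mul]
            · rw [hpiv r' r hle, if_neg hne, mul_zero]
          · simp
      _ = 0 := hb r

theorem sum_smul_eq_zero_of_apply_eq_zero
    (hpiv : ∀ r s, β s ≤ β r → G r (e s) = if r = s then p r else 0)
    (hdvd : ∀ r c, p r ∣ G r c) {b : ι → R} (hb : ∀ s, (∑ r, b r • G r) (e s) = 0) :
    ∑ r, b r • G r = 0 := by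
  simp only [Finset.sum_apply, Pi.smul_apply, smul_eq_mul] at hb
  refine Finset.sum_eq_zero fun r _ => funext fun c => ?_
  obtain ⟨d, hd⟩ := hdvd r c
  rw [Pi.smul_apply, hd, smul_eq_mul, ← mul_assoc,
    mul_pivot_eq_zero_of_sum_mul_apply_eq_zero hpiv hdvd hb r, zero_mul, Pi.zero_apply]

theorem eq_zero_of_mem_closure_of_apply_eq_zero
    (hpiv : ∀ r s, β s ≤ β r → G r (e s) = if r = s then p r else 0)
    (hdvd : ∀ r c, p r ∣ G r c) {x : κ → R} (hx : x ∈ AddSubgroup.closure (Set.range G))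
    (hx0 : ∀ s, x (e s) = 0) : x = 0 := by
  obtain ⟨a, rfl⟩ := AddSubgroup.mem_closure_range_iff_of_fintype.1 hx
  simp only [← Int.cast_smul_eq_zsmul R] at hx0 ⊢
  exact sum_smul_eq_zero_of_apply_eq_zero hpiv hdvd hx0

end Echelon

theorem add_eq_zero_or_eq {M : Type*} [AddCommGroup M] {h x y : M} (hh : h + h = 0)
    (hx : x = 0 ∨ x = h) (hy : y = 0 ∨ y = h) : x + y = 0 ∨ x + y = h := by
  rcases hx with rfl | rfl <;> rcases hy with rfl | rfl <;> simp [hh]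

theorem exists_mem_forall_apply_eq {M ι κ : Type*} [AddCommGroup M] [LinearOrder ι]
    [Fintype ι] {h : M} (hh : h + h = 0) {A : AddSubgroup (κ → M)} {H : ι → κ → M}
    {e : ι → κ} (hHA : ∀ r, H r ∈ A) (hH : ∀ r c, H r c = 0 ∨ H r c = h)
    (hlow : ∀ r s, s < r → H r (e s) = 0) (hdiag : ∀ r, H r (e r) = h)
    {w : κ → M} (hw : ∀ s, w (e s) = 0 ∨ w (e s) = h) :
    ∃ c ∈ A, (∀ i, c i = 0 ∨ c i = h) ∧ ∀ s, c (e s) = w (e s) := by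
  classical
  suffices ∀ S : Finset ι,
      ∃ c ∈ A, (∀ i, c i = 0 ∨ c i = h) ∧ ∀ s ∈ S, c (e s) = w (e s) by
    obtain ⟨c, hcA, hc, hcw⟩ := this Finset.univ
    exact ⟨c, hcA, hc, fun s => hcw s (Finset.mem_univ s)⟩
  intro S
  induction S using Finset.induction_on_max with
  | empty => exact ⟨0, A.zero_mem, fun _ => Or.inl rfl, by simp⟩
  | insert r S hlt ih =>
    obtain ⟨c, hcA, hc, hcw⟩ := ih
    by_cases hr : c (e r) = w (e r)
    · refine ⟨c, hcA, hc, fun s hs => ?_⟩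
      rcases Finset.mem_insert.1 hs with rfl | hs
      exacts [hr, hcw s hs]
    · refine ⟨c + H r, A.add_mem hcA (hHA r), fun i => add_eq_zero_or_eq hh (hc i) (hH r i),
        fun s hs => ?_⟩
      rcases Finset.mem_insert.1 hs with rfl | hs
      · rw [Pi.add_apply, hdiag]
        rcases hc (e s) with h1 | h1 <;> rcases hw s with h2 | h2 <;>
          simp_all
      · rw [Pi.add_apply, hlow r s (hlt s hs), add_zero, hcw s hs]

theorem two_pow_pred_mul_two (m : ℕ) : (2 : ZMod (2 ^ m)) ^ (m - 1) * 2 = 0 := by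
  rcases m with _ | m
  · exact Subsingleton.elim (α := ZMod 1) _ _
  · rw [Nat.add_sub_cancel, ← pow_succ]
    exact_mod_cast ZMod.natCast_self (2 ^ (m + 1))

theorem two_pow_pred_mul_eq_zero_or (m : ℕ) (a : ZMod (2 ^ m)) :
    2 ^ (m - 1) * a = 0 ∨ 2 ^ (m - 1) * a = 2 ^ (m - 1) := by
  obtain ⟨k, hk | hk⟩ := Nat.even_or_odd' a.val
  · left
    rw [← ZMod.natCast_zmod_val a, hk, Nat.cast_mul, Nat.cast_ofNat, ← mul_assoc,
      two_pow_pred_mul_two, zero_mul]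
  · right
    rw [← ZMod.natCast_zmod_val a, hk]
    push_cast
    rw [mul_add, ← mul_assoc, two_pow_pred_mul_two, zero_mul, zero_add, mul_one]

theorem psum_mono {m : ℕ} (kv : Fin m → ℕ) : Monotone (psum kv) :=
  fun _ _ hab => Finset.sum_le_sum_of_subset (Finset.range_subset_range.mpr hab)

def InBlock {m : ℕ} (kv : Fin m → ℕ) (j t : ℕ) : Prop :=
  psum kv j ≤ t ∧ t < psum kv (j + 1)

theorem exists_inBlock {m : ℕ} (kv : Fin m → ℕ) {t : ℕ} (ht : t < psum kv m) :
    ∃ j : Fin m, InBlock kv j t := by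
  classical
  let P := fun j => psum kv j ≤ t
  have hP : P (Nat.findGreatest P m) := Nat.findGreatest_spec (Nat.zero_le m) (by simp [P, psum])
  have hlt : Nat.findGreatest P m < m := (Nat.findGreatest_le m).lt_of_ne fun h => by
    rw [h] at hP
    exact not_lt.2 hP ht
  exact ⟨⟨_, hlt⟩, hP,
    not_le.1 (Nat.findGreatest_is_greatest (P := P) (Nat.lt_succ_self _) hlt)⟩

theorem InBlock.le_of_lt {m : ℕ} {kv : Fin m → ℕ} {j l t u : ℕ} (ht : InBlock kv j t)
    (hu : InBlock kv l u) (htu : t < u) : j ≤ l := by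
  by_contra! hlj
  have : psum kv (l + 1) ≤ psum kv j := psum_mono kv hlj
  unfold InBlock at ht hu
  omega

namespace StandardForm

variable {m n : ℕ} {kv : Fin m → ℕ} {β : Fin (psum kv m) → Fin m}

section

variable {N : ℕ} {G : Fin (psum kv m) → Fin n → ZMod N} (hSF : StandardForm kv G)
  (hβ : ∀ r, InBlock kv (β r) r)
include hSF hβ

theorem apply_castLE_of_le (r s : Fin (psum kv m)) (h : β s ≤ β r) :
    G r (Fin.castLE hSF.1 s) = if r = s then 2 ^ (β r : ℕ) else 0 := by
  have H := (hSF.2 (β r) r (hβ r).1 (hβ r).2 (Fin.castLE hSF.1 s)).1 (β s) (hβ s).1 (hβ s).2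
  rcases h.lt_or_eq with hlt | heq
  · rw [H.1 hlt, if_neg (by rintro rfl; exact hlt.ne rfl)]
  · rw [H.2 heq]
    simp [Fin.ext_iff]

theorem two_pow_dvd (r : Fin (psum kv m)) (c : Fin n) : (2 : ZMod N) ^ (β r : ℕ) ∣ G r c := by
  have H := hSF.2 (β r) r (hβ r).1 (hβ r).2 c
  by_cases hc : (c : ℕ) < psum kv m
  · obtain ⟨l, hl⟩ := exists_inBlock kv hc
    rcases lt_trichotomy l (β r) with hlt | rfl | hgt
    · rw [(H.1 l hl.1 hl.2).1 hlt]
      exact dvd_zero _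
    · rw [(H.1 _ hl.1 hl.2).2 rfl]
      split_ifs
      exacts [dvd_rfl, dvd_zero _]
    · exact H.2 (Or.inr ⟨l, hgt, hl⟩)
  · exact H.2 (Or.inl (not_lt.1 hc))

theorem eq_zero_of_mem_closure {x : Fin n → ZMod N}
    (hx : x ∈ AddSubgroup.closure (Set.range G)) (hx0 : ∀ s, x (Fin.castLE hSF.1 s) = 0) :
    x = 0 :=
  eq_zero_of_mem_closure_of_apply_eq_zero (apply_castLE_of_le hSF hβ) (two_pow_dvd hSF hβ) hx hx0

end

theorem exists_half_mem_closure {G : Fin (psum kv m) → Fin n → ZMod (2 ^ m)}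
    (hSF : StandardForm kv G) (hβ : ∀ r, InBlock kv (β r) r) {w : Fin n → ZMod (2 ^ m)}
    (hw : ∀ s, w (Fin.castLE hSF.1 s) = 0 ∨ w (Fin.castLE hSF.1 s) = 2 ^ (m - 1)) :
    ∃ c ∈ AddSubgroup.closure (Set.range G), (∀ i, c i = 0 ∨ c i = 2 ^ (m - 1)) ∧
      ∀ s, c (Fin.castLE hSF.1 s) = w (Fin.castLE hSF.1 s) := by
  -- the half-rows `2 ^ (m - 1 - β r) • G r`: pivot `2 ^ (m - 1)`, entries in `{0, 2 ^ (m - 1)}`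
  have hpow : ∀ r,
      (2 : ZMod (2 ^ m)) ^ (m - 1 - (β r : ℕ)) * 2 ^ (β r : ℕ) = 2 ^ (m - 1) := by
    intro r
    rw [← pow_add, Nat.sub_add_cancel (Nat.le_sub_one_of_lt (β r).2)]
  have hsmul : ∀ r c, ((2 ^ (m - 1 - (β r : ℕ)) : ℕ) • G r) c =
      2 ^ (m - 1 - (β r : ℕ)) * G r c := by
    intro r c
    simp
  refine exists_mem_forall_apply_eq (by rw [← mul_two, two_pow_pred_mul_two])
    (H := fun r => (2 ^ (m - 1 - (β r : ℕ)) : ℕ) • G r)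
    (fun r => AddSubgroup.nsmul_mem _ (AddSubgroup.subset_closure (Set.mem_range_self r)) _)
    (fun r c => ?_) (fun r s hsr => ?_) (fun r => ?_) hw
  · obtain ⟨a, ha⟩ := two_pow_dvd hSF hβ r c
    rw [hsmul, ha, ← mul_assoc, hpow]
    exact two_pow_pred_mul_eq_zero_or m a
  · have hle : β s ≤ β r := Fin.le_iff_val_le_val.2 ((hβ s).le_of_lt (hβ r) hsr)
    rw [hsmul, apply_castLE_of_le hSF hβ r s hle, if_neg hsr.ne', mul_zero]
  · rw [hsmul, apply_castLE_of_le hSF hβ r r le_rfl, if_pos rfl, hpow]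

end StandardForm

theorem unique_half_codeword_general {m n : ℕ} (kv : Fin m → ℕ)
    (G : Fin (psum kv m) → Fin n → ZMod (2 ^ m)) (hSF : StandardForm kv G)
    (C : AddSubgroup (Fin n → ZMod (2 ^ m)))
    (hgen : C = AddSubgroup.closure (Set.range G))
    (w : Fin n → ZMod (2 ^ m))
    (hcoord : ∀ i, w i = 0 ∨ w i = (2 ^ (m - 1) : ZMod (2 ^ m))) :
    ∃! c : Fin n → ZMod (2 ^ m),
      c ∈ C ∧ (∀ i, c i = 0 ∨ c i = (2 ^ (m - 1) : ZMod (2 ^ m))) ∧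
      ∀ i : Fin n, (i : ℕ) < psum kv m → c i = w i := by
  subst hgen
  choose β hβ using fun r : Fin (psum kv m) => exists_inBlock kv r.2
  obtain ⟨c, hcC, hc, hcw⟩ := hSF.exists_half_mem_closure hβ (fun s => hcoord _)
  refine ⟨c, ⟨hcC, hc, fun i hi => hcw ⟨i, hi⟩⟩, fun y ⟨hyC, _, hyw⟩ => ?_⟩
  refine sub_eq_zero.1 (hSF.eq_zero_of_mem_closure hβ (sub_mem hyC hcC) fun s => ?_)
  rw [Pi.sub_apply, hyw _ s.2, hcw s, sub_self]

/-- for every vector `w` with coordinates in `{0, 2^(m-1)}` there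
is a unique codeword with coordinates in `{0, 2^(m-1)}` agreeing with `w` on the
first `K = k₁ + ⋯ + k_m` coordinates. -/
theorem unique_half_codeword {m n : ℕ} (hm : 2 ≤ m) (kv : Fin m → ℕ)
    (G : Fin (psum kv m) → Fin n → ZMod (2 ^ m)) (hSF : StandardForm kv G)
    (C : AddSubgroup (Fin n → ZMod (2 ^ m)))
    (hgen : C = AddSubgroup.closure (Set.range G))
    (w : Fin n → ZMod (2 ^ m))
    (hcoord : ∀ i, w i = 0 ∨ w i = (2 ^ (m - 1) : ZMod (2 ^ m))) :
    ∃! c : Fin n → ZMod (2 ^ m),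
      c ∈ C ∧ (∀ i, c i = 0 ∨ c i = (2 ^ (m - 1) : ZMod (2 ^ m))) ∧
      ∀ i : Fin n, (i : ℕ) < psum kv m → c i = w i :=
  unique_half_codeword_general kv G hSF C hgen w hcoord
end

section
/- Let m ≥ 2 and let C be a Type II Z_{2^m}-code of length n with a generator matrix G in standard form of type (k_1,…,k_m); set K = k_1+⋯+k_m and let G_1,…,G_K be the rows of G. Let w ∈ (Z/2^m)^n \ C be a vector all of whose coordinates lie in {0, 2^{m−1}}, which is zero on the first K coordinates, and with n_{2^{m−1}}(w) even in case m = 2. Define B_E = {G_t : 1 ≤ t ≤ K, ⟨G_t, w⟩ = 0} and B_O = {G_1,…,G_K} \ B_E, fix any G_i ∈ B_O, and set B_O′ = {G_i + G_j : G_j ∈ B_O}. Then the additive subgroup of (Z/2^m)^n generated by B_O′ ∪ B_E ∪ {w} equals C̃ = {v ∈ C : ⟨w,v⟩ = 0} + ⟨w⟩. -/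
open Finset

/-! Since `2 • w = 0`, the functional `φ = ⟨·, w⟩` takes values killed by `2`; in the cyclic
group `ℤ/2^m` these are `0` and the single element `h = φ (G i)` of order two. Each `G j` with
`φ (G j) = h` equals `(G i + G j) - G i`, so `C` is spanned by `B_O' ∪ B_E` and `G i`, and
an element `a + c • G i` with `a ∈ ⟨B_O' ∪ B_E⟩ ≤ ker φ` lies in `ker φ` iff `c` is even,
i.e. iff `c • G i = (c / 2) • (G i + G i) ∈ ⟨B_O'⟩`. -/

theorem IsAddCyclic.eq_zero_or_eq_of_two_nsmul_eq_zero {α : Type*} [AddGroup α] [Finite α]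
    [IsAddCyclic α] {a b : α} (ha : 2 • a = 0) (hb : 2 • b = 0) (hb0 : b ≠ 0) :
    a = 0 ∨ a = b := by
  classical
  have := Fintype.ofFinite α
  by_contra! h
  have hsub : ({0, a, b} : Finset α) ⊆ Finset.univ.filter fun x => 2 • x = 0 := by
    intro x hx
    simp only [Finset.mem_insert, Finset.mem_singleton] at hx
    rcases hx with rfl | rfl | rfl <;> simp [*]
  have hcard : ({0, a, b} : Finset α).card = 3 := by
    rw [Finset.card_insert_of_notMem (by simp [Ne.symm h.1, Ne.symm hb0]),
      Finset.card_pair h.2]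
  have := (Finset.card_le_card hsub).trans (IsAddCyclic.card_nsmul_eq_zero_le two_pos)
  omega

section PairedGenerators

variable {M A ι : Type*} [AddCommGroup M] [AddCommGroup A] (g : ι → M) (φ : M →+ A) (i : ι)

/-- The set `B_O' ∪ B_E` of the paper, with `φ = ⟨·, w⟩`. -/
def pairedGenerators : Set M :=
  {v | ∃ j, φ (g j) ≠ 0 ∧ v = g i + g j} ∪ {v | ∃ t, φ (g t) = 0 ∧ v = g t}

theorem closure_pairedGenerators_le_inf_ker (hi : addOrderOf (φ (g i)) = 2)
    (hg : ∀ j, φ (g j) ≠ 0 → φ (g j) = φ (g i)) :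
    AddSubgroup.closure (pairedGenerators g φ i) ≤
      AddSubgroup.closure (Set.range g) ⊓ φ.ker := by
  rw [AddSubgroup.closure_le]
  rintro _ (⟨j, hj, rfl⟩ | ⟨t, ht, rfl⟩)
  · refine ⟨add_mem (AddSubgroup.subset_closure ⟨i, rfl⟩)
      (AddSubgroup.subset_closure ⟨j, rfl⟩), ?_⟩
    change φ _ = 0
    rw [map_add, hg j hj, ← two_nsmul, ← hi, addOrderOf_nsmul_eq_zero]
  · exact ⟨AddSubgroup.subset_closure ⟨t, rfl⟩, ht⟩

theorem closure_range_le_closure_pairedGenerators_sup_zmultiples :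
    AddSubgroup.closure (Set.range g) ≤
      AddSubgroup.closure (pairedGenerators g φ i) ⊔ AddSubgroup.zmultiples (g i) := by
  rw [AddSubgroup.closure_le]
  rintro _ ⟨j, rfl⟩
  by_cases hj : φ (g j) = 0
  · exact le_sup_left (α := AddSubgroup M)
      (AddSubgroup.subset_closure (Or.inr ⟨j, hj, rfl⟩))
  · rw [show g j = (g i + g j) - g i by abel]
    exact sub_mem
      (le_sup_left (α := AddSubgroup M) (AddSubgroup.subset_closure (Or.inl ⟨j, hj, rfl⟩)))
      (le_sup_right (α := AddSubgroup M) (AddSubgroup.mem_zmultiples (g i)))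

theorem closure_pairedGenerators_eq_inf_ker (hi : addOrderOf (φ (g i)) = 2)
    (hg : ∀ j, φ (g j) ≠ 0 → φ (g j) = φ (g i)) :
    AddSubgroup.closure (pairedGenerators g φ i) =
      AddSubgroup.closure (Set.range g) ⊓ φ.ker := by
  refine le_antisymm (closure_pairedGenerators_le_inf_ker g φ i hi hg) ?_
  rintro v ⟨hv, hvφ⟩
  obtain ⟨a, ha, _, ⟨c, rfl⟩, rfl⟩ :=
    AddSubgroup.mem_sup.mp (closure_range_le_closure_pairedGenerators_sup_zmultiples g φ i hv)
  have hcφ : c • φ (g i) = 0 := by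
    have haφ : φ a = 0 := (closure_pairedGenerators_le_inf_ker g φ i hi hg ha).2
    change φ (a + c • g i) = 0 at hvφ
    rwa [map_add, haφ, zero_add, map_zsmul] at hvφ
  obtain ⟨d, rfl⟩ : (2 : ℤ) ∣ c := by
    exact_mod_cast hi ▸ addOrderOf_dvd_iff_zsmul_eq_zero.mpr hcφ
  have hφi : φ (g i) ≠ 0 := fun h => by simp [h] at hi
  have hii : g i + g i ∈ AddSubgroup.closure (pairedGenerators g φ i) :=
    AddSubgroup.subset_closure (Or.inl ⟨i, hφi, rfl⟩)
  refine add_mem ha ?_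
  show (2 * d) • g i ∈ _
  rw [show (2 * d) • g i = d • (g i + g i) by rw [mul_comm, mul_zsmul, two_zsmul]]
  exact zsmul_mem hii d

end PairedGenerators

theorem innerZ_eq_dotProduct {N n : ℕ} (x y : Fin n → ZMod N) : innerZ x y = x ⬝ᵥ y := rfl

def innerZRight {N n : ℕ} (w : Fin n → ZMod N) : (Fin n → ZMod N) →+ ZMod N :=
  AddMonoidHom.mk' (· ⬝ᵥ w) fun a b => add_dotProduct a b w

theorem two_mul_two_pow_pred_eq_zero (m : ℕ) : (2 : ZMod (2 ^ m)) * 2 ^ (m - 1) = 0 := by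
  cases m with
  | zero => rfl
  | succ m =>
    rw [Nat.add_sub_cancel, ← pow_succ']
    exact_mod_cast ZMod.natCast_self (2 ^ (m + 1))

theorem doubling_generators_general {m n : ℕ} (kv : Fin m → ℕ)
    (G : Fin (psum kv m) → Fin n → ZMod (2 ^ m))
    (C : AddSubgroup (Fin n → ZMod (2 ^ m)))
    (hgen : C = AddSubgroup.closure (Set.range G))
    (w : Fin n → ZMod (2 ^ m))
    (hcoord : ∀ i, w i = 0 ∨ w i = (2 ^ (m - 1) : ZMod (2 ^ m)))
    (i : Fin (psum kv m)) (hi : innerZ (G i) w ≠ 0) :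
    AddSubgroup.closure
      ({v | ∃ j : Fin (psum kv m), innerZ (G j) w ≠ 0 ∧ v = G i + G j} ∪
       {v | ∃ t : Fin (psum kv m), innerZ (G t) w = 0 ∧ v = G t} ∪ {w}) =
    evenPart C w ⊔ AddSubgroup.closure {w} := by
  have : NeZero (2 ^ m) := ⟨by positivity⟩
  have h2w : 2 • w = 0 := by
    ext j
    rcases hcoord j with h | h <;> simp [h, two_mul_two_pow_pred_eq_zero]
  have h2φ (x) : 2 • innerZRight w x = 0 := by
    rw [innerZRight, AddMonoidHom.mk'_apply, ← dotProduct_smul, h2w, dotProduct_zero]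
  have hφi : addOrderOf (innerZRight w (G i)) = 2 := addOrderOf_eq_prime (h2φ _) hi
  have hφ (j) (hj : innerZRight w (G j) ≠ 0) : innerZRight w (G j) = innerZRight w (G i) :=
    (IsAddCyclic.eq_zero_or_eq_of_two_nsmul_eq_zero (h2φ _) (h2φ _) hi).resolve_left hj
  have heven : evenPart C w = C ⊓ (innerZRight w).ker := by
    ext v
    exact and_congr_right' (by rw [innerZ_eq_dotProduct, dotProduct_comm]; rfl)
  rw [AddSubgroup.closure_union, heven, hgen,
    ← closure_pairedGenerators_eq_inf_ker G _ i hφi hφ]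
  rfl

/-- the set `B_O' ∪ B_E ∪ {w}` generates the doubled code
`C̃ = {v ∈ C : ⟨w,v⟩ = 0} + ⟨w⟩`. -/
theorem doubling_generators {m n : ℕ} (hm : 2 ≤ m) (kv : Fin m → ℕ)
    (G : Fin (psum kv m) → Fin n → ZMod (2 ^ m)) (hSF : StandardForm kv G)
    (C : AddSubgroup (Fin n → ZMod (2 ^ m)))
    (hgen : C = AddSubgroup.closure (Set.range G))
    (hsd : IsSelfDual C) (hT2 : ∀ x ∈ C, 2 ^ (m + 1) ∣ euclWt x)
    (w : Fin n → ZMod (2 ^ m)) (hwC : w ∉ C)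
    (hcoord : ∀ i, w i = 0 ∨ w i = (2 ^ (m - 1) : ZMod (2 ^ m)))
    (hzero : ∀ i : Fin n, (i : ℕ) < psum kv m → w i = 0)
    (hpar : m = 2 → 2 ∣ cntEq (2 ^ (m - 1) : ZMod (2 ^ m)) w)
    (i : Fin (psum kv m)) (hi : innerZ (G i) w ≠ 0) :
    AddSubgroup.closure
      ({v | ∃ j : Fin (psum kv m), innerZ (G j) w ≠ 0 ∧ v = G i + G j} ∪
       {v | ∃ t : Fin (psum kv m), innerZ (G t) w = 0 ∧ v = G t} ∪ {w}) =
    evenPart C w ⊔ AddSubgroup.closure {w} :=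
  doubling_generators_general kv G C hgen w hcoord i hi
end

section
/- Let m ≥ 2 and let C be a Type II Z_{2^m}-code of length n with a generator matrix G in standard form of type (k_1,…,k_m); set K = k_1+⋯+k_m. Let w ∈ (Z/2^m)^n \ C be a vector all of whose coordinates lie in {0, 2^{m−1}}, which is zero on the first K coordinates, and with n_{2^{m−1}}(w) even in case m = 2. Then the code C̃ = {v ∈ C : ⟨w,v⟩ = 0} + ⟨w⟩ is of type (k_1−1, k_2+2) if m = 2; of type (k_1−1, k_2+1, k_3+1) if m = 3; and of type (k_1−1, k_2+1, k_3, …, k_{m−1}, k_m+1) if m ≥ 4. Equivalently, C̃ is isomorphic as an abelian group to (Z/4)^{k_1−1} × (Z/2)^{k_2+2} if m = 2, to (Z/8)^{k_1−1} × (Z/4)^{k_2+1} × (Z/2)^{k_3+1} if m = 3, and to (Z/2^m)^{k_1−1} × (Z/2^{m−1})^{k_2+1} × (∏_{j=3}^{m−1} (Z/2^{m−j+1})^{k_j}) × (Z/2)^{k_m+1} if m ≥ 4. -/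
open Finset

/-
Since `w ∉ C = C^⊥` while every row of `G` outside the first block is even, some row `g` of the
first block has `⟨w, g⟩ = 2^(m-1)`. Subtracting `g` from the other rows of the first block that
pair nontrivially with `w` makes them orthogonal to `w`; these rows, `2g`, the rows of the later
blocks and `w` generate `C̃`, since a vector of `C` is a combination of them plus `k g`, and
`⟨w, ·⟩ = 0` forces `k` to be even. Each of these generators equals `2^j` at a pivot column where
the generators treated after it vanish, so a vanishing integer combination has its `2^j`-multiple
generators peeled off one at a time: the coefficient of a generator of block `j` is divisible by
`2^(m-j)`. Hence `C̃` is the direct sum of the cyclic groups of order `2^(m-j)` they generate.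
-/

section ZModFamily

lemma exists_intCast_eq {ι : Type*} (q : ι → ℕ) (x : ∀ p, ZMod (q p)) :
    ∃ c : ι → ℤ, (fun p => (c p : ZMod (q p))) = x :=
  ⟨fun p => (ZMod.intCast_surjective (x p)).choose,
    funext fun p => (ZMod.intCast_surjective (x p)).choose_spec⟩

variable {ι V : Type*} [Fintype ι] [AddCommGroup V] (q : ι → ℕ) (g : ι → V)

def zmodPiLift (hg : ∀ p, (q p : ℤ) • g p = 0) : (∀ p, ZMod (q p)) →+ V :=
  ∑ p, (ZMod.lift (q p) ⟨zmultiplesHom V (g p), by simpa using hg p⟩).comp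
    (Pi.evalAddMonoidHom _ p)

lemma zmodPiLift_intCast (hg : ∀ p, (q p : ℤ) • g p = 0) (c : ι → ℤ) :
    zmodPiLift q g hg (fun p => (c p : ZMod (q p))) = ∑ p, c p • g p := by
  simp [zmodPiLift, ZMod.lift_coe]

lemma range_zmodPiLift (hg : ∀ p, (q p : ℤ) • g p = 0) :
    (zmodPiLift q g hg).range = AddSubgroup.closure (Set.range g) := by
  ext v
  rw [AddSubgroup.mem_closure_range_iff_of_fintype, AddMonoidHom.mem_range]
  constructor
  · rintro ⟨x, rfl⟩
    obtain ⟨c, rfl⟩ := exists_intCast_eq q x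
    exact ⟨c, zmodPiLift_intCast q g hg c⟩
  · rintro ⟨c, rfl⟩
    exact ⟨_, zmodPiLift_intCast q g hg c⟩

lemma injective_zmodPiLift (hg : ∀ p, (q p : ℤ) • g p = 0)
    (hind : ∀ c : ι → ℤ, ∑ p, c p • g p = 0 → ∀ p, (q p : ℤ) ∣ c p) :
    Function.Injective (zmodPiLift q g hg) := by
  rw [injective_iff_map_eq_zero]
  intro x hx
  obtain ⟨c, rfl⟩ := exists_intCast_eq q x
  rw [zmodPiLift_intCast] at hx
  funext p
  exact (ZMod.intCast_zmod_eq_zero_iff_dvd _ _).2 (hind c hx p)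

theorem nonempty_closure_range_addEquiv_pi_zmod (hg : ∀ p, (q p : ℤ) • g p = 0)
    (hind : ∀ c : ι → ℤ, ∑ p, c p • g p = 0 → ∀ p, (q p : ℤ) ∣ c p) :
    Nonempty (AddSubgroup.closure (Set.range g) ≃+ ∀ p, ZMod (q p)) :=
  ⟨((AddMonoidHom.ofInjective (injective_zmodPiLift q g hg hind)).trans
    (AddEquiv.addSubgroupCongr (range_zmodPiLift q g hg))).symm⟩

end ZModFamily

lemma dvd_of_intCast_mul_eq_zero {N q d : ℕ} (hqd : q * d = N) (hd : d ≠ 0) {k : ℤ}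
    (h : (k : ZMod N) * d = 0) : (q : ℤ) ∣ k := by
  have h' : ((k * d : ℤ) : ZMod N) = 0 := by push_cast; exact h
  rw [ZMod.intCast_zmod_eq_zero_iff_dvd, ← hqd, Nat.cast_mul] at h'
  exact Int.dvd_of_mul_dvd_mul_right (by exact_mod_cast hd) h'

def IsPivotCol {ι κ R : Type*} [Zero R] (g : ι → κ → R) (rank : ι → ℕ) (p : ι) (c : κ) :
    Prop :=
  ∀ p', p' ≠ p → rank p ≤ rank p' → g p' c = 0

/- Strong induction on the rank: at the pivot column of `p`, the terms of lower rank vanish by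
induction and the others by `IsPivotCol`, which leaves `x p * d p = 0`. -/
theorem dvd_coeff_of_isPivotCol {ι κ : Type*} [Fintype ι] {N : ℕ} [NeZero N]
    (g : ι → κ → ZMod N) (q d : ι → ℕ) (hqd : ∀ p, q p * d p = N)
    (hdvd : ∀ p c, ∃ a, g p c = d p * a) (rank : ι → ℕ)
    (hpiv : ∀ p, ∃ c, g p c = d p ∧ IsPivotCol g rank p c)
    (x : ι → ℤ) (hx : ∑ p, x p • g p = 0) (p : ι) : (q p : ℤ) ∣ x p := by
  induction hr : rank p using Nat.strong_induction_on generalizing p with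
  | _ r ih =>
  obtain ⟨c, hpc, hc⟩ := hpiv p
  have hsum : ∑ p', x p' • g p' c = x p • g p c := by
    refine Finset.sum_eq_single p (fun p' _ hne => ?_) (by simp)
    rcases le_or_gt (rank p) (rank p') with hle | hlt
    · rw [hc p' hne hle, smul_zero]
    · obtain ⟨k, hk⟩ := ih _ (hr ▸ hlt) p' rfl
      obtain ⟨a, ha⟩ := hdvd p' c
      rw [ha, hk, zsmul_eq_mul, Int.cast_mul, Int.cast_natCast,
        show (q p' : ZMod N) * k * (d p' * a) = (q p' * d p' : ℕ) * (k * a) by push_cast; ring,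
        hqd, ZMod.natCast_self, zero_mul]
  have h : ∑ p', x p' • g p' c = 0 := by
    simpa only [Finset.sum_apply, Pi.smul_apply, Pi.zero_apply] using congrFun hx c
  rw [hsum, hpc, zsmul_eq_mul] at h
  exact dvd_of_intCast_mul_eq_zero (hqd p)
    (fun h0 => NeZero.ne N (by rw [← hqd p, h0, mul_zero])) h

lemma sigma_eq_of_val_eq {m : ℕ} {s : Fin m → ℕ} {p p' : Σ j : Fin m, Fin (s j)}
    (h₁ : (p.1 : ℕ) = p'.1) (h₂ : (p.2 : ℕ) = p'.2) : p = p' := by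
  obtain ⟨j, t⟩ := p
  obtain ⟨j', t'⟩ := p'
  obtain rfl : j = j' := Fin.ext h₁
  obtain rfl : t = t' := Fin.ext h₂
  rfl

namespace Z2mCode

section StandardForm

variable {m : ℕ} (kv : Fin m → ℕ)

lemma extk_val (j : Fin m) : extk kv j = kv j := by
  simp [extk, j.2]

lemma psum_succ_val (j : Fin m) : psum kv (j + 1) = psum kv j + kv j := by
  rw [psum, Finset.sum_range_succ, extk_val]; rfl

lemma psum_mono : Monotone (psum kv) := fun _ _ h =>
  Finset.sum_le_sum_of_subset (Finset.range_subset_range.2 h)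

lemma exists_mem_block {M c : ℕ} (hM : M ≤ m) (hc : c < psum kv M) :
    ∃ l : Fin m, psum kv l ≤ c ∧ c < psum kv (l + 1) := by
  induction M with
  | zero => simp [psum] at hc
  | succ M ih =>
    by_cases h : psum kv M ≤ c
    · exact ⟨⟨M, hM⟩, h, hc⟩
    · exact ih (by omega) (by omega)

def row {K : ℕ} {V : Type*} [Zero V] (G : Fin K → V) (r : ℕ) : V :=
  if h : r < K then G ⟨r, h⟩ else 0

lemma row_val {K : ℕ} {V : Type*} [Zero V] (G : Fin K → V) (r : Fin K) : row G r = G r := by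
  simp [row]

lemma row_mem_closure {K : ℕ} {V : Type*} [AddGroup V] (G : Fin K → V) (r : ℕ) :
    row G r ∈ AddSubgroup.closure (Set.range G) := by
  unfold row
  split
  · exact AddSubgroup.subset_closure (Set.mem_range_self _)
  · exact zero_mem _

variable {kv} {N n : ℕ} {G : Fin (psum kv m) → Fin n → ZMod N} {r : ℕ} {j : Fin m}

lemma row_apply_of_lt (hSF : StandardForm kv G) (hr₁ : psum kv j ≤ r)
    (hr₂ : r < psum kv (j + 1)) {c : Fin n} (hc : (c : ℕ) < psum kv j) : row G r c = 0 := by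
  have hrK : r < psum kv m := hr₂.trans_le (psum_mono kv j.2)
  obtain ⟨l, hl₁, hl₂⟩ := exists_mem_block kv j.2.le hc
  have hlj : l < j := by
    by_contra h
    have := psum_mono kv (show (j : ℕ) ≤ l by simpa using h)
    omega
  rw [row, dif_pos hrK]
  exact ((hSF.2 j ⟨r, hrK⟩ hr₁ hr₂ c).1 l hl₁ hl₂).1 hlj

lemma row_apply_of_mem_block (hSF : StandardForm kv G) (hr₁ : psum kv j ≤ r)
    (hr₂ : r < psum kv (j + 1)) {c : Fin n} (hc₁ : psum kv j ≤ c)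
    (hc₂ : (c : ℕ) < psum kv (j + 1)) :
    row G r c = if r = c then 2 ^ (j : ℕ) else 0 := by
  have hrK : r < psum kv m := hr₂.trans_le (psum_mono kv j.2)
  rw [row, dif_pos hrK]
  exact ((hSF.2 j ⟨r, hrK⟩ hr₁ hr₂ c).1 j hc₁ hc₂).2 rfl

lemma exists_row_apply_eq_two_pow_mul (hSF : StandardForm kv G)
    (hr₁ : psum kv j ≤ r) (hr₂ : r < psum kv (j + 1)) (c : Fin n) :
    ∃ a, row G r c = 2 ^ (j : ℕ) * a := by
  rcases lt_or_ge (c : ℕ) (psum kv j) with hc | hc₁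
  · exact ⟨0, by rw [row_apply_of_lt hSF hr₁ hr₂ hc, mul_zero]⟩
  rcases lt_or_ge (c : ℕ) (psum kv (j + 1)) with hc₂ | hc₂
  · rw [row_apply_of_mem_block hSF hr₁ hr₂ hc₁ hc₂]
    split
    · exact ⟨1, (mul_one _).symm⟩
    · exact ⟨0, (mul_zero _).symm⟩
  have hrK : r < psum kv m := hr₂.trans_le (psum_mono kv j.2)
  rw [row, dif_pos hrK]
  refine (hSF.2 j ⟨r, hrK⟩ hr₁ hr₂ c).2 ?_
  by_cases hcK : psum kv m ≤ c
  · exact Or.inl hcK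
  obtain ⟨l, hl₁, hl₂⟩ := exists_mem_block kv le_rfl (not_le.1 hcK)
  refine Or.inr ⟨l, ?_, hl₁, hl₂⟩
  by_contra h
  have := psum_mono kv (show (l : ℕ) + 1 ≤ j + 1 by simp at h; omega)
  omega

end StandardForm

section InnerProduct

def innerZHom {N n : ℕ} (w : Fin n → ZMod N) : (Fin n → ZMod N) →+ ZMod N where
  toFun := innerZ w
  map_zero' := by simp [innerZ]
  map_add' a b := by simp [innerZ, mul_add, Finset.sum_add_distrib]

lemma innerZHom_apply {N n : ℕ} (w v : Fin n → ZMod N) : innerZHom w v = innerZ w v := rfl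

variable {m n : ℕ}

lemma two_pow_eq_zero : (2 : ZMod (2 ^ m)) ^ m = 0 := by
  exact_mod_cast ZMod.natCast_self (2 ^ m)

lemma two_pow_pred_mul_two (hm : 1 ≤ m) : (2 : ZMod (2 ^ m)) ^ (m - 1) * 2 = 0 := by
  rw [← pow_succ, Nat.sub_add_cancel hm, two_pow_eq_zero]

lemma eq_zero_or_eq_two_pow_pred_of_mul_two_eq_zero (hm : 1 ≤ m) {x : ZMod (2 ^ m)}
    (hx : x * 2 = 0) : x = 0 ∨ x = 2 ^ (m - 1) := by
  have hsplit : 2 ^ m = 2 ^ (m - 1) * 2 := by rw [← pow_succ, Nat.sub_add_cancel hm]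
  have hval : 2 ^ (m - 1) * 2 ∣ x.val * 2 := by
    rw [← hsplit, ← ZMod.natCast_eq_zero_iff]; push_cast; simpa using hx
  obtain ⟨k, hk⟩ := Nat.dvd_of_mul_dvd_mul_right two_pos hval
  have hlt : x.val < 2 ^ (m - 1) * 2 := hsplit ▸ ZMod.val_lt x
  have hk2 : k < 2 := by rw [hk] at hlt; exact Nat.lt_of_mul_lt_mul_left hlt
  rw [← ZMod.natCast_zmod_val x, hk]
  interval_cases k <;> simp

variable {w : Fin n → ZMod (2 ^ m)}

lemma innerZ_eq_zero_of_forall_two_dvd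
    (hw : ∀ i, w i = 0 ∨ w i = (2 ^ (m - 1) : ZMod (2 ^ m))) (hm : 1 ≤ m)
    {v : Fin n → ZMod (2 ^ m)} (hv : ∀ i, ∃ a, v i = 2 * a) : innerZ w v = 0 := by
  refine Finset.sum_eq_zero fun i _ => ?_
  obtain ⟨a, ha⟩ := hv i
  rcases hw i with h | h
  · rw [h, zero_mul]
  · rw [h, ha, ← mul_assoc, two_pow_pred_mul_two hm, zero_mul]

lemma innerZ_mul_two
    (hw : ∀ i, w i = 0 ∨ w i = (2 ^ (m - 1) : ZMod (2 ^ m))) (hm : 1 ≤ m)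
    (v : Fin n → ZMod (2 ^ m)) : innerZ w v * 2 = 0 := by
  have h : innerZ w v * 2 = innerZ w (fun i => 2 * v i) := by
    simp only [innerZ, Finset.sum_mul]
    exact Finset.sum_congr rfl fun i _ => by ring
  exact h ▸ innerZ_eq_zero_of_forall_two_dvd hw hm fun i => ⟨v i, rfl⟩

lemma innerZ_self (hw : ∀ i, w i = 0 ∨ w i = (2 ^ (m - 1) : ZMod (2 ^ m))) (hm : 2 ≤ m) :
    innerZ w w = 0 := by
  refine innerZ_eq_zero_of_forall_two_dvd hw (by omega) fun i => ?_
  rcases hw i with h | h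
  · exact ⟨0, by rw [h, mul_zero]⟩
  · exact ⟨2 ^ (m - 2), by rw [h, ← pow_succ']; congr 1; omega⟩

lemma innerZ_eq_zero_or_eq
    (hw : ∀ i, w i = 0 ∨ w i = (2 ^ (m - 1) : ZMod (2 ^ m))) (hm : 1 ≤ m)
    (v : Fin n → ZMod (2 ^ m)) : innerZ w v = 0 ∨ innerZ w v = 2 ^ (m - 1) :=
  eq_zero_or_eq_two_pow_pred_of_mul_two_eq_zero hm (innerZ_mul_two hw hm v)

end InnerProduct

section DoubledCode

variable {m n : ℕ} (kv : Fin m → ℕ) (G : Fin (psum kv m) → Fin n → ZMod (2 ^ m))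
  (w : Fin n → ZMod (2 ^ m)) (r₀ : ℕ)

def doubledType (j : Fin m) : ℕ :=
  kv j - (if (j : ℕ) = 0 then 1 else 0) + (if (j : ℕ) = 1 then 1 else 0)
    + (if (j : ℕ) = m - 1 then 1 else 0)

def skipAt (r t : ℕ) : ℕ := if t < r then t else t + 1

def correctedRow (s : ℕ) : Fin n → ZMod (2 ^ m) :=
  if innerZ w (row G s) = 0 then row G s else row G s - row G r₀

/- The generators of `C̃`, indexed as in the target group: block `0` holds the corrected rows of
the first block other than `r₀`, block `1` gets `2 • row G r₀` after its own rows, and block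
`m - 1` ends with `w`. -/
def doubledGen : (Σ j : Fin m, Fin (doubledType kv j)) → Fin n → ZMod (2 ^ m)
  | ⟨j, t⟩ =>
    if (j : ℕ) = 0 then correctedRow kv G w r₀ (skipAt r₀ t)
    else if (t : ℕ) < kv j then row G (psum kv j + t)
    else if (j : ℕ) = 1 ∧ (t : ℕ) = kv j then 2 • row G r₀
    else w

def doubledRank : (Σ j : Fin m, Fin (doubledType kv j)) → ℕ
  | ⟨j, t⟩ =>
    if (j : ℕ) = 0 then 0
    else if (t : ℕ) < kv j then j + 1
    else if (j : ℕ) = 1 ∧ (t : ℕ) = kv j then 1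
    else m + 1

lemma doubledGen_cases (p : Σ j : Fin m, Fin (doubledType kv j)) :
    ((p.1 : ℕ) = 0 ∧ doubledGen kv G w r₀ p = correctedRow kv G w r₀ (skipAt r₀ p.2) ∧
      doubledRank kv p = 0) ∨
    ((p.1 : ℕ) ≠ 0 ∧ (p.2 : ℕ) < kv p.1 ∧
      doubledGen kv G w r₀ p = row G (psum kv p.1 + p.2) ∧ doubledRank kv p = p.1 + 1) ∨
    ((p.1 : ℕ) = 1 ∧ (p.2 : ℕ) = kv p.1 ∧ doubledGen kv G w r₀ p = 2 • row G r₀ ∧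
      doubledRank kv p = 1) ∨
    ((p.1 : ℕ) = m - 1 ∧ (p.2 : ℕ) = doubledType kv p.1 - 1 ∧
      doubledGen kv G w r₀ p = w ∧ doubledRank kv p = m + 1) := by
  obtain ⟨j, t⟩ := p
  have ht : (t : ℕ) < doubledType kv j := t.2
  have hsz := doubledType.eq_1 kv j
  simp only [doubledGen, doubledRank]
  split_ifs with h₀ h₁ h₂
  · exact Or.inl ⟨h₀, rfl, rfl⟩
  · exact Or.inr (Or.inl ⟨h₀, h₁, rfl, rfl⟩)
  · exact Or.inr (Or.inr (Or.inl ⟨h₂.1, h₂.2, rfl, rfl⟩))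
  · refine Or.inr (Or.inr (Or.inr ⟨?_, ?_, rfl, rfl⟩)) <;> split_ifs at hsz <;> omega

variable {kv G w r₀}

lemma skipAt_ne (r t : ℕ) : skipAt r t ≠ r := by
  unfold skipAt; split <;> omega

lemma skipAt_injective (r : ℕ) : Function.Injective (skipAt r) := by
  intro a b h; unfold skipAt at h; split_ifs at h <;> omega

lemma skipAt_lt {r t k : ℕ} (hr : r < k) (ht : t < k - 1) : skipAt r t < k := by
  unfold skipAt; split <;> omega

lemma psum_one_eq (hm : 0 < m) : psum kv 1 = kv ⟨0, hm⟩ := by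
  simpa [psum] using extk_val kv ⟨0, hm⟩

lemma doubledType_of_val_eq_zero (hm : 2 ≤ m) {j : Fin m} (h : (j : ℕ) = 0) :
    doubledType kv j = psum kv 1 - 1 := by
  have hj : j = ⟨0, by omega⟩ := Fin.ext h
  rw [psum_one_eq (by omega), hj, doubledType, if_neg (show (0 : ℕ) ≠ m - 1 by omega)]
  simp

lemma row_apply_of_lt_psum_one (hSF : StandardForm kv G) (hm : 0 < m) {s : ℕ} {c : Fin n}
    (hs : s < psum kv 1) (hc : (c : ℕ) < psum kv 1) : row G s c = if s = c then 1 else 0 := by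
  have h0 : psum kv ((⟨0, hm⟩ : Fin m) : ℕ) = 0 := by simp [psum]
  simpa using row_apply_of_mem_block hSF (j := ⟨0, hm⟩) (r := s) (by omega) hs (c := c)
    (by omega) hc

lemma correctedRow_apply (hSF : StandardForm kv G) (hm : 0 < m) (hr₀ : r₀ < psum kv 1)
    {s : ℕ} {c : Fin n} (hs : s < psum kv 1) (hc : (c : ℕ) < psum kv 1)
    (hcr : (c : ℕ) ≠ r₀) :
    correctedRow kv G w r₀ s c = if s = c then 1 else 0 := by
  have hr₀c : row G r₀ c = 0 := by
    rw [row_apply_of_lt_psum_one hSF hm hr₀ hc, if_neg (Ne.symm hcr)]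
  unfold correctedRow
  split
  · exact row_apply_of_lt_psum_one hSF hm hs hc
  · rw [Pi.sub_apply, hr₀c, sub_zero, row_apply_of_lt_psum_one hSF hm hs hc]

lemma row_apply_of_lt_psum (hSF : StandardForm kv G) {j : Fin m} {t : ℕ} (ht : t < kv j)
    {c : Fin n} (hc : (c : ℕ) < psum kv j) : row G (psum kv j + t) c = 0 :=
  row_apply_of_lt hSF (by omega) (by rw [psum_succ_val]; omega) hc

lemma doubledGen_apply_eq_two_pow_mul (hSF : StandardForm kv G)
    (hw : ∀ i, w i = 0 ∨ w i = (2 ^ (m - 1) : ZMod (2 ^ m)))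
    (p : Σ j : Fin m, Fin (doubledType kv j)) (c : Fin n) :
    ∃ a, doubledGen kv G w r₀ p c = 2 ^ (p.1 : ℕ) * a := by
  rcases doubledGen_cases kv G w r₀ p with
    ⟨h0, hg, -⟩ | ⟨-, ht, hg, -⟩ | ⟨h1, -, hg, -⟩ | ⟨hl, -, hg, -⟩
  · exact ⟨doubledGen kv G w r₀ p c, by rw [h0, pow_zero, one_mul]⟩
  · rw [hg]
    exact exists_row_apply_eq_two_pow_mul hSF (by omega) (by rw [psum_succ_val]; omega) c
  · exact ⟨row G r₀ c, by rw [hg, h1, Pi.smul_apply, two_nsmul, pow_one, two_mul]⟩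
  · rw [hg, hl]
    rcases hw c with h | h
    · exact ⟨0, by rw [h, mul_zero]⟩
    · exact ⟨1, by rw [h, mul_one]⟩

lemma skipAt_lt_psum_one (hm : 2 ≤ m) (hr₀ : r₀ < psum kv 1)
    {p : Σ j : Fin m, Fin (doubledType kv j)} (h0 : (p.1 : ℕ) = 0) :
    skipAt r₀ p.2 < psum kv 1 :=
  skipAt_lt hr₀ (doubledType_of_val_eq_zero hm h0 ▸ p.2.2)

lemma exists_pivot_of_val_eq_zero (hm : 2 ≤ m) (hSF : StandardForm kv G) (hr₀ : r₀ < psum kv 1)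
    (hzero : ∀ i : Fin n, (i : ℕ) < psum kv m → w i = 0)
    {p : Σ j : Fin m, Fin (doubledType kv j)} (h0 : (p.1 : ℕ) = 0)
    (hg : doubledGen kv G w r₀ p = correctedRow kv G w r₀ (skipAt r₀ p.2)) :
    ∃ c : Fin n, doubledGen kv G w r₀ p c = 2 ^ (p.1 : ℕ) ∧
      IsPivotCol (doubledGen kv G w r₀) (doubledRank kv) p c := by
  have hs := skipAt_lt_psum_one hm hr₀ h0
  have h1m : psum kv 1 ≤ psum kv m := psum_mono kv (by omega)
  refine ⟨⟨skipAt r₀ p.2, by linarith [hSF.1]⟩, ?_, fun p' hne _ => ?_⟩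
  · rw [hg, correctedRow_apply hSF (by omega) hr₀ hs hs (skipAt_ne _ _), if_pos rfl, h0,
      pow_zero]
  rcases doubledGen_cases kv G w r₀ p' with
    ⟨h0', hg', -⟩ | ⟨h0', ht', hg', -⟩ | ⟨-, -, hg', -⟩ | ⟨-, -, hg', -⟩
  · have hne' : (p'.2 : ℕ) ≠ p.2 := fun h => hne (sigma_eq_of_val_eq (h0'.trans h0.symm) h)
    rw [hg', correctedRow_apply hSF (by omega) hr₀ (skipAt_lt_psum_one hm hr₀ h0') hs
      (skipAt_ne _ _), if_neg fun h => hne' (skipAt_injective r₀ h)]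
  · rw [hg']
    exact row_apply_of_lt_psum hSF ht' (hs.trans_le (psum_mono kv (by omega)))
  · rw [hg', Pi.smul_apply, row_apply_of_lt_psum_one hSF (by omega) hr₀ hs,
      if_neg (skipAt_ne _ _).symm, smul_zero]
  · rw [hg']
    exact hzero _ (by simp only; omega)

lemma exists_pivot_of_lt (hSF : StandardForm kv G)
    (hzero : ∀ i : Fin n, (i : ℕ) < psum kv m → w i = 0)
    {p : Σ j : Fin m, Fin (doubledType kv j)} (h0 : (p.1 : ℕ) ≠ 0)
    (ht : (p.2 : ℕ) < kv p.1) (hg : doubledGen kv G w r₀ p = row G (psum kv p.1 + p.2))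
    (hr : doubledRank kv p = p.1 + 1) :
    ∃ c : Fin n, doubledGen kv G w r₀ p c = 2 ^ (p.1 : ℕ) ∧
      IsPivotCol (doubledGen kv G w r₀) (doubledRank kv) p c := by
  have hsucc := psum_succ_val kv p.1
  have hle : psum kv (p.1 + 1) ≤ psum kv m := psum_mono kv p.1.2
  refine ⟨⟨psum kv p.1 + p.2, by linarith [hSF.1]⟩, ?_, fun p' hne hrank => ?_⟩
  · rw [hg, row_apply_of_mem_block hSF (j := p.1) (by omega) (by omega) (by simp)
      (by simp only; omega), if_pos rfl]
  rcases doubledGen_cases kv G w r₀ p' with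
    ⟨-, -, hr'⟩ | ⟨-, ht', hg', hr'⟩ | ⟨-, -, -, hr'⟩ | ⟨-, -, hg', -⟩
  · omega
  · rw [hg']
    rcases eq_or_ne (p'.1 : ℕ) p.1 with hj | hj
    · have hne' : (p'.2 : ℕ) ≠ p.2 := fun h => hne (sigma_eq_of_val_eq hj h)
      have hj' : p'.1 = p.1 := Fin.ext hj
      rw [row_apply_of_mem_block hSF (j := p'.1) (by omega) (by rw [psum_succ_val]; omega)
        (by simp [hj']) (by simp only [hj']; omega), if_neg (by simp only [hj']; omega)]
    · have hlt : (p.1 : ℕ) + 1 ≤ p'.1 := by omega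
      exact row_apply_of_lt_psum hSF ht' (by simp only; linarith [psum_mono kv hlt])
  · omega
  · rw [hg']
    exact hzero _ (by simp only; omega)

lemma exists_pivot_of_extra (hm : 2 ≤ m) (hSF : StandardForm kv G) (hr₀ : r₀ < psum kv 1)
    (hzero : ∀ i : Fin n, (i : ℕ) < psum kv m → w i = 0)
    {p : Σ j : Fin m, Fin (doubledType kv j)} (h1 : (p.1 : ℕ) = 1)
    (ht : (p.2 : ℕ) = kv p.1) (hg : doubledGen kv G w r₀ p = 2 • row G r₀)
    (hr : doubledRank kv p = 1) :
    ∃ c : Fin n, doubledGen kv G w r₀ p c = 2 ^ (p.1 : ℕ) ∧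
      IsPivotCol (doubledGen kv G w r₀) (doubledRank kv) p c := by
  have h1m : psum kv 1 ≤ psum kv m := psum_mono kv (by omega)
  refine ⟨⟨r₀, by linarith [hSF.1]⟩, ?_, fun p' hne hrank => ?_⟩
  · rw [hg, Pi.smul_apply, row_apply_of_lt_psum_one hSF (by omega) hr₀ hr₀, if_pos rfl, h1,
      two_nsmul, pow_one, one_add_one_eq_two]
  rcases doubledGen_cases kv G w r₀ p' with
    ⟨-, -, hr'⟩ | ⟨h0', ht', hg', -⟩ | ⟨h1', ht', -, -⟩ | ⟨-, -, hg', -⟩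
  · omega
  · rw [hg']
    exact row_apply_of_lt_psum hSF ht' (hr₀.trans_le (psum_mono kv (by omega)))
  · have hj : p'.1 = p.1 := Fin.ext (h1'.trans h1.symm)
    exact absurd (sigma_eq_of_val_eq (h1'.trans h1.symm) (by rw [ht', ht, hj])) hne
  · rw [hg']
    exact hzero _ (by simp only; omega)

lemma exists_pivot_of_last (hm : 2 ≤ m) (hw : ∀ i, w i = 0 ∨ w i = (2 ^ (m - 1) : ZMod (2 ^ m)))
    (hw0 : w ≠ 0)
    {p : Σ j : Fin m, Fin (doubledType kv j)} (hl : (p.1 : ℕ) = m - 1)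
    (ht : (p.2 : ℕ) = doubledType kv p.1 - 1) (hg : doubledGen kv G w r₀ p = w)
    (hr : doubledRank kv p = m + 1) :
    ∃ c : Fin n, doubledGen kv G w r₀ p c = 2 ^ (p.1 : ℕ) ∧
      IsPivotCol (doubledGen kv G w r₀) (doubledRank kv) p c := by
  obtain ⟨i, hi⟩ := Function.ne_iff.1 hw0
  refine ⟨i, by rw [hg, hl]; exact (hw i).resolve_left hi, fun p' hne hrank => ?_⟩
  rcases doubledGen_cases kv G w r₀ p' with
    ⟨-, -, hr'⟩ | ⟨-, -, -, hr'⟩ | ⟨-, -, -, hr'⟩ | ⟨hl', ht', -, -⟩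
  · omega
  · have := p'.1.2; omega
  · omega
  · have hj : p'.1 = p.1 := Fin.ext (hl'.trans hl.symm)
    exact absurd (sigma_eq_of_val_eq (hl'.trans hl.symm) (by rw [ht', ht, hj])) hne

lemma exists_pivot (hm : 2 ≤ m) (hSF : StandardForm kv G) (hr₀ : r₀ < psum kv 1)
    (hzero : ∀ i : Fin n, (i : ℕ) < psum kv m → w i = 0)
    (hw : ∀ i, w i = 0 ∨ w i = (2 ^ (m - 1) : ZMod (2 ^ m))) (hw0 : w ≠ 0)
    (p : Σ j : Fin m, Fin (doubledType kv j)) :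
    ∃ c : Fin n, doubledGen kv G w r₀ p c = 2 ^ (p.1 : ℕ) ∧
      IsPivotCol (doubledGen kv G w r₀) (doubledRank kv) p c := by
  rcases doubledGen_cases kv G w r₀ p with
    ⟨h0, hg, -⟩ | ⟨h0, ht, hg, hr⟩ | ⟨h1, ht, hg, hr⟩ | ⟨hl, ht, hg, hr⟩
  · exact exists_pivot_of_val_eq_zero hm hSF hr₀ hzero h0 hg
  · exact exists_pivot_of_lt hSF hzero h0 ht hg hr
  · exact exists_pivot_of_extra hm hSF hr₀ hzero h1 ht hg hr
  · exact exists_pivot_of_last hm hw hw0 hl ht hg hr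

lemma zsmul_doubledGen_eq_zero (hSF : StandardForm kv G)
    (hw : ∀ i, w i = 0 ∨ w i = (2 ^ (m - 1) : ZMod (2 ^ m)))
    (p : Σ j : Fin m, Fin (doubledType kv j)) :
    ((2 ^ (m - p.1) : ℕ) : ℤ) • doubledGen kv G w r₀ p = 0 := by
  funext c
  obtain ⟨a, ha⟩ := doubledGen_apply_eq_two_pow_mul hSF hw p c
  rw [Pi.smul_apply, ha, Pi.zero_apply, zsmul_eq_mul]
  push_cast
  rw [← mul_assoc, ← pow_add, Nat.sub_add_cancel p.1.2.le, two_pow_eq_zero, zero_mul]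

theorem dvd_of_sum_zsmul_doubledGen_eq_zero (hm : 2 ≤ m) (hSF : StandardForm kv G)
    (hr₀ : r₀ < psum kv 1) (hzero : ∀ i : Fin n, (i : ℕ) < psum kv m → w i = 0)
    (hw : ∀ i, w i = 0 ∨ w i = (2 ^ (m - 1) : ZMod (2 ^ m))) (hw0 : w ≠ 0)
    (x : (Σ j : Fin m, Fin (doubledType kv j)) → ℤ)
    (hx : ∑ p, x p • doubledGen kv G w r₀ p = 0) (p : Σ j : Fin m, Fin (doubledType kv j)) :
    ((2 ^ (m - p.1) : ℕ) : ℤ) ∣ x p :=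
  dvd_coeff_of_isPivotCol (doubledGen kv G w r₀) (fun p => 2 ^ (m - p.1))
    (fun p => 2 ^ (p.1 : ℕ))
    (fun p => by rw [← pow_add, Nat.sub_add_cancel p.1.2.le])
    (fun p c => by exact_mod_cast doubledGen_apply_eq_two_pow_mul hSF hw p c) (doubledRank kv)
    (fun p => by exact_mod_cast exists_pivot hm hSF hr₀ hzero hw hw0 p) x hx p

end DoubledCode

section Span

variable {m n : ℕ} {kv : Fin m → ℕ} {G : Fin (psum kv m) → Fin n → ZMod (2 ^ m)}
  {w : Fin n → ZMod (2 ^ m)} {r₀ : ℕ}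

lemma innerZ_row_eq_zero (hSF : StandardForm kv G)
    (hw : ∀ i, w i = 0 ∨ w i = (2 ^ (m - 1) : ZMod (2 ^ m))) {j : Fin m} (hj : (j : ℕ) ≠ 0)
    {r : ℕ} (hr₁ : psum kv j ≤ r) (hr₂ : r < psum kv (j + 1)) : innerZ w (row G r) = 0 := by
  refine innerZ_eq_zero_of_forall_two_dvd hw (by omega) fun c => ?_
  obtain ⟨a, ha⟩ := exists_row_apply_eq_two_pow_mul hSF hr₁ hr₂ c
  refine ⟨2 ^ ((j : ℕ) - 1) * a, ?_⟩
  rw [ha, ← mul_assoc, ← pow_succ', Nat.sub_add_cancel (by omega)]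

lemma exists_row_innerZ_ne_zero (hSF : StandardForm kv G)
    (hsd : IsSelfDual (AddSubgroup.closure (Set.range G)))
    (hwC : w ∉ AddSubgroup.closure (Set.range G))
    (hw : ∀ i, w i = 0 ∨ w i = (2 ^ (m - 1) : ZMod (2 ^ m))) :
    ∃ r₀ < psum kv 1, innerZ w (row G r₀) ≠ 0 := by
  by_contra! h
  refine hwC ((hsd w).2 fun y hy => ?_)
  refine (AddSubgroup.closure_le (innerZHom w).ker).2 (Set.range_subset_iff.2 fun r => ?_) hy
  obtain ⟨l, hl₁, hl₂⟩ := exists_mem_block kv le_rfl r.2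
  rw [SetLike.mem_coe, AddMonoidHom.mem_ker, innerZHom_apply, ← row_val G r]
  by_cases hl : (l : ℕ) = 0
  · exact h r (by simpa [hl] using hl₂)
  · exact innerZ_row_eq_zero hSF hw hl hl₁ hl₂

lemma innerZ_doubledGen (hm : 2 ≤ m) (hSF : StandardForm kv G)
    (hw : ∀ i, w i = 0 ∨ w i = (2 ^ (m - 1) : ZMod (2 ^ m))) (hφ : innerZ w (row G r₀) ≠ 0)
    (p : Σ j : Fin m, Fin (doubledType kv j)) : innerZ w (doubledGen kv G w r₀ p) = 0 := by
  rcases doubledGen_cases kv G w r₀ p with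
    ⟨-, hg, -⟩ | ⟨h0, ht, hg, -⟩ | ⟨-, -, hg, -⟩ | ⟨-, -, hg, -⟩
  · rw [hg, correctedRow]
    split
    · assumption
    · rw [← innerZHom_apply, map_sub, innerZHom_apply, innerZHom_apply,
        (innerZ_eq_zero_or_eq hw (by omega) _).resolve_left ‹_›,
        (innerZ_eq_zero_or_eq hw (by omega) _).resolve_left hφ, sub_self]
  · rw [hg]
    exact innerZ_row_eq_zero hSF hw h0 (by omega) (by rw [psum_succ_val]; omega)
  · rw [hg, ← innerZHom_apply, map_nsmul, innerZHom_apply, nsmul_eq_mul, Nat.cast_ofNat,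
      mul_comm, innerZ_mul_two hw (by omega)]
  · rw [hg, innerZ_self hw hm]

lemma doubledGen_mem_or_eq (p : Σ j : Fin m, Fin (doubledType kv j)) :
    doubledGen kv G w r₀ p ∈ AddSubgroup.closure (Set.range G) ∨
      doubledGen kv G w r₀ p = w := by
  rcases doubledGen_cases kv G w r₀ p with
    ⟨-, hg, -⟩ | ⟨-, -, hg, -⟩ | ⟨-, -, hg, -⟩ | ⟨-, -, hg, -⟩
  · left
    rw [hg, correctedRow]
    split
    · exact row_mem_closure G _
    · exact sub_mem (row_mem_closure G _) (row_mem_closure G _)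
  · exact Or.inl (hg ▸ row_mem_closure G _)
  · exact Or.inl (hg ▸ nsmul_mem (row_mem_closure G _) 2)
  · exact Or.inr hg

lemma w_mem_closure_doubledGen (hm : 2 ≤ m) :
    w ∈ AddSubgroup.closure (Set.range (doubledGen kv G w r₀)) := by
  let j : Fin m := ⟨m - 1, by omega⟩
  have hsz := doubledType.eq_1 kv j
  have hj : (j : ℕ) = m - 1 := rfl
  refine AddSubgroup.subset_closure
    ⟨⟨j, ⟨doubledType kv j - 1, by split_ifs at hsz <;> omega⟩⟩, ?_⟩
  simp only [doubledGen]
  rw [if_neg (by omega), if_neg (by split_ifs at hsz <;> omega),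
    if_neg (by split_ifs at hsz <;> omega)]

lemma two_nsmul_row_mem_closure_doubledGen (hm : 2 ≤ m) :
    2 • row G r₀ ∈ AddSubgroup.closure (Set.range (doubledGen kv G w r₀)) := by
  refine AddSubgroup.subset_closure
    ⟨⟨⟨1, by omega⟩, ⟨kv ⟨1, by omega⟩, ?_⟩⟩, by simp [doubledGen]⟩
  rw [doubledType]
  simp only [one_ne_zero, if_false, if_true, tsub_zero]
  omega

lemma exists_skipAt_eq {r s k : ℕ} (hr : r < k) (hs : s < k) (hsr : s ≠ r) :
    ∃ t < k - 1, skipAt r t = s := by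
  refine ⟨if s < r then s else s - 1, by split <;> omega, ?_⟩
  unfold skipAt
  split_ifs <;> omega

lemma mem_closure_doubledGen_sup (hm : 2 ≤ m) (hr₀ : r₀ < psum kv 1) (r : Fin (psum kv m)) :
    G r ∈ AddSubgroup.closure (Set.range (doubledGen kv G w r₀)) ⊔
      AddSubgroup.zmultiples (row G r₀) := by
  obtain ⟨l, hl₁, hl₂⟩ := exists_mem_block kv le_rfl r.2
  rw [← row_val G r]
  by_cases hl : (l : ℕ) = 0
  · have hr1 : (r : ℕ) < psum kv 1 := by simpa [hl] using hl₂
    rcases eq_or_ne (r : ℕ) r₀ with h | h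
    · rw [h]
      exact AddSubgroup.mem_sup_right (AddSubgroup.mem_zmultiples _)
    obtain ⟨t, ht, hskip⟩ := exists_skipAt_eq hr₀ hr1 h
    let j : Fin m := ⟨0, by omega⟩
    have hmem :
        correctedRow kv G w r₀ r ∈ AddSubgroup.closure (Set.range (doubledGen kv G w r₀)) :=
      AddSubgroup.subset_closure ⟨⟨j, ⟨t, by rwa [doubledType_of_val_eq_zero hm rfl]⟩⟩, by
        simp only [doubledGen]; rw [if_pos rfl, hskip]⟩
    rw [correctedRow] at hmem
    split_ifs at hmem
    · exact AddSubgroup.mem_sup_left hmem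
    · rw [← sub_add_cancel (row G r) (row G r₀)]
      exact add_mem (AddSubgroup.mem_sup_left hmem)
        (AddSubgroup.mem_sup_right (AddSubgroup.mem_zmultiples _))
  · have hsucc := psum_succ_val kv l
    have hsz := doubledType.eq_1 kv l
    refine AddSubgroup.mem_sup_left (AddSubgroup.subset_closure
      ⟨⟨l, ⟨r - psum kv l, by split_ifs at hsz <;> omega⟩⟩, ?_⟩)
    simp only [doubledGen]
    rw [if_neg hl, if_pos (by omega), Nat.add_sub_cancel' hl₁]

lemma evenPart_le_closure_doubledGen (hm : 2 ≤ m) (hSF : StandardForm kv G)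
    (hr₀ : r₀ < psum kv 1) (hw : ∀ i, w i = 0 ∨ w i = (2 ^ (m - 1) : ZMod (2 ^ m)))
    (hφ : innerZ w (row G r₀) ≠ 0) :
    evenPart (AddSubgroup.closure (Set.range G)) w ≤
      AddSubgroup.closure (Set.range (doubledGen kv G w r₀)) := by
  set S := AddSubgroup.closure (Set.range (doubledGen kv G w r₀))
  have hSker : S ≤ (innerZHom w).ker := AddSubgroup.closure_le _ |>.2 <| Set.range_subset_iff.2
    fun p => innerZ_doubledGen hm hSF hw hφ p
  have hC : AddSubgroup.closure (Set.range G) ≤ S ⊔ AddSubgroup.zmultiples (row G r₀) :=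
    AddSubgroup.closure_le _ |>.2 <| Set.range_subset_iff.2 (mem_closure_doubledGen_sup hm hr₀)
  rintro v ⟨hv, hv0⟩
  obtain ⟨u, hu, z, ⟨k, rfl⟩, rfl⟩ := AddSubgroup.mem_sup.1 (hC hv)
  rw [← innerZHom_apply, map_add, map_zsmul, hSker hu, zero_add, innerZHom_apply,
    (innerZ_eq_zero_or_eq hw (by omega) _).resolve_left hφ, zsmul_eq_mul] at hv0
  obtain ⟨k', rfl⟩ := dvd_of_intCast_mul_eq_zero (q := 2) (d := 2 ^ (m - 1))
    (by rw [← pow_succ', Nat.sub_add_cancel (by omega)]) (by positivity) (by exact_mod_cast hv0)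
  refine add_mem hu ?_
  show ((2 : ℕ) * k' : ℤ) • row G r₀ ∈ S
  rw [Nat.cast_ofNat, mul_comm, mul_zsmul, two_zsmul, ← two_nsmul]
  exact zsmul_mem (two_nsmul_row_mem_closure_doubledGen hm) k'

theorem closure_doubledGen_eq (hm : 2 ≤ m) (hSF : StandardForm kv G) (hr₀ : r₀ < psum kv 1)
    (hw : ∀ i, w i = 0 ∨ w i = (2 ^ (m - 1) : ZMod (2 ^ m))) (hφ : innerZ w (row G r₀) ≠ 0) :
    AddSubgroup.closure (Set.range (doubledGen kv G w r₀)) =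
      evenPart (AddSubgroup.closure (Set.range G)) w ⊔ AddSubgroup.closure {w} := by
  refine le_antisymm (AddSubgroup.closure_le _ |>.2 <| Set.range_subset_iff.2 fun p => ?_)
    (sup_le (evenPart_le_closure_doubledGen hm hSF hr₀ hw hφ)
      ((AddSubgroup.closure_le _).2 (Set.singleton_subset_iff.2 (w_mem_closure_doubledGen hm))))
  rcases doubledGen_mem_or_eq p with h | h
  · exact AddSubgroup.mem_sup_left ⟨h, innerZ_doubledGen hm hSF hw hφ p⟩
  · rw [h]
    exact AddSubgroup.mem_sup_right (AddSubgroup.subset_closure rfl)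

end Span

end Z2mCode

open Z2mCode in
theorem doubling_type_general {m n : ℕ} (hm : 2 ≤ m) (kv : Fin m → ℕ)
    (G : Fin (psum kv m) → Fin n → ZMod (2 ^ m)) (hSF : StandardForm kv G)
    (C : AddSubgroup (Fin n → ZMod (2 ^ m)))
    (hgen : C = AddSubgroup.closure (Set.range G))
    (hsd : IsSelfDual C)
    (w : Fin n → ZMod (2 ^ m)) (hwC : w ∉ C)
    (hcoord : ∀ i, w i = 0 ∨ w i = (2 ^ (m - 1) : ZMod (2 ^ m)))
    (hzero : ∀ i : Fin n, (i : ℕ) < psum kv m → w i = 0) :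
    Nonempty ((evenPart C w ⊔ AddSubgroup.closure {w} :
        AddSubgroup (Fin n → ZMod (2 ^ m))) ≃+
      ∀ j : Fin m,
        Fin (kv j - (if (j : ℕ) = 0 then 1 else 0) + (if (j : ℕ) = 1 then 1 else 0)
          + (if (j : ℕ) = m - 1 then 1 else 0)) → ZMod (2 ^ (m - (j : ℕ)))) := by
  subst hgen
  have hw0 : w ≠ 0 := fun h => hwC (h ▸ zero_mem _)
  obtain ⟨r₀, hr₀, hφ⟩ := exists_row_innerZ_ne_zero hSF hsd hwC hcoord
  obtain ⟨e⟩ := nonempty_closure_range_addEquiv_pi_zmod (fun p => 2 ^ (m - p.1))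
    (doubledGen kv G w r₀) (zsmul_doubledGen_eq_zero hSF hcoord)
    (dvd_of_sum_zsmul_doubledGen_eq_zero hm hSF hr₀ hzero hcoord hw0)
  rw [closure_doubledGen_eq hm hSF hr₀ hcoord hφ] at e
  exact ⟨e.trans (LinearEquiv.piCurry ℤ fun j (_ : Fin (doubledType kv j)) =>
    ZMod (2 ^ (m - (j : ℕ)))).toAddEquiv⟩

/-- the doubled code `C̃` is of type `(k₁-1, k₂+2)` if `m = 2`,
`(k₁-1, k₂+1, k₃+1)` if `m = 3`, and `(k₁-1, k₂+1, k₃, …, k_{m-1}, k_m+1)` if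
`m ≥ 4`; i.e. (0-indexed, uniformly in `m`) it is isomorphic as an abelian group
to `∏_j (Z/2^(m-j))^(k_j - [j=0] + [j=1] + [j=m-1])`. -/
theorem doubling_type {m n : ℕ} (hm : 2 ≤ m) (kv : Fin m → ℕ)
    (G : Fin (psum kv m) → Fin n → ZMod (2 ^ m)) (hSF : StandardForm kv G)
    (C : AddSubgroup (Fin n → ZMod (2 ^ m)))
    (hgen : C = AddSubgroup.closure (Set.range G))
    (hsd : IsSelfDual C) (hT2 : ∀ x ∈ C, 2 ^ (m + 1) ∣ euclWt x)
    (w : Fin n → ZMod (2 ^ m)) (hwC : w ∉ C)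
    (hcoord : ∀ i, w i = 0 ∨ w i = (2 ^ (m - 1) : ZMod (2 ^ m)))
    (hzero : ∀ i : Fin n, (i : ℕ) < psum kv m → w i = 0)
    (hpar : m = 2 → 2 ∣ cntEq (2 ^ (m - 1) : ZMod (2 ^ m)) w) :
    Nonempty ((evenPart C w ⊔ AddSubgroup.closure {w} :
        AddSubgroup (Fin n → ZMod (2 ^ m))) ≃+
      ∀ j : Fin m,
        Fin (kv j - (if (j : ℕ) = 0 then 1 else 0) + (if (j : ℕ) = 1 then 1 else 0)
          + (if (j : ℕ) = m - 1 then 1 else 0)) → ZMod (2 ^ (m - (j : ℕ)))) :=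
  doubling_type_general hm kv G hSF C hgen hsd w hwC hcoord hzero
end

section
/- Let m ≥ 2 and let C be a Type II Z_{2^m}-code of length n with a generator matrix G in standard form of type (k_1,…,k_m); set K = k_1+⋯+k_m and let G_1,…,G_K be the rows of G. Let w ∈ (Z/2^m)^n \ C be a vector all of whose coordinates lie in {0, 2^{m−1}}, which is zero on the first K coordinates, and with n_{2^{m−1}}(w) even in case m = 2. Define B_E = {G_t : ⟨G_t, w⟩ = 0} and B_O = {G_1,…,G_K} \ B_E. Then for any two G_i, G_l ∈ B_O, the additive subgroup of (Z/2^m)^n generated by {G_i + G_j : G_j ∈ B_O} ∪ B_E ∪ {w} equals the additive subgroup generated by {G_l + G_j : G_j ∈ B_O} ∪ B_E ∪ {w}. -/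
open Finset

/-- the code generated by `B_O' ∪ B_E ∪ {w}` is independent of the
choice of the row `G_i ∈ B_O`. -/
theorem doubling_independent {m n : ℕ} (hm : 2 ≤ m) (kv : Fin m → ℕ)
    (G : Fin (psum kv m) → Fin n → ZMod (2 ^ m)) (hSF : StandardForm kv G)
    (C : AddSubgroup (Fin n → ZMod (2 ^ m)))
    (hgen : C = AddSubgroup.closure (Set.range G))
    (hsd : IsSelfDual C) (hT2 : ∀ x ∈ C, 2 ^ (m + 1) ∣ euclWt x)
    (w : Fin n → ZMod (2 ^ m)) (hwC : w ∉ C)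
    (hcoord : ∀ i, w i = 0 ∨ w i = (2 ^ (m - 1) : ZMod (2 ^ m)))
    (hzero : ∀ i : Fin n, (i : ℕ) < psum kv m → w i = 0)
    (hpar : m = 2 → 2 ∣ cntEq (2 ^ (m - 1) : ZMod (2 ^ m)) w)
    (i l : Fin (psum kv m)) (hi : innerZ (G i) w ≠ 0) (hl : innerZ (G l) w ≠ 0) :
    AddSubgroup.closure
      ({v | ∃ j : Fin (psum kv m), innerZ (G j) w ≠ 0 ∧ v = G i + G j} ∪
       {v | ∃ t : Fin (psum kv m), innerZ (G t) w = 0 ∧ v = G t} ∪ {w}) =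
    AddSubgroup.closure
      ({v | ∃ j : Fin (psum kv m), innerZ (G j) w ≠ 0 ∧ v = G l + G j} ∪
       {v | ∃ t : Fin (psum kv m), innerZ (G t) w = 0 ∧ v = G t} ∪ {w}) := by
  have key : ∀ (i l : Fin (psum kv m)), innerZ (G i) w ≠ 0 → innerZ (G l) w ≠ 0 →
      AddSubgroup.closure
        ({v | ∃ j : Fin (psum kv m), innerZ (G j) w ≠ 0 ∧ v = G l + G j} ∪
         {v | ∃ t : Fin (psum kv m), innerZ (G t) w = 0 ∧ v = G t} ∪ {w}) ≤
      AddSubgroup.closure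
        ({v | ∃ j : Fin (psum kv m), innerZ (G j) w ≠ 0 ∧ v = G i + G j} ∪
         {v | ∃ t : Fin (psum kv m), innerZ (G t) w = 0 ∧ v = G t} ∪ {w}) := by
    intro i l hi hl
    refine (AddSubgroup.closure_le _).mpr ?_
    rintro v hv
    rcases hv with (⟨j, hj, rfl⟩ | hB) | hw
    · have h1 : G i + G l ∈ AddSubgroup.closure
          ({v | ∃ j : Fin (psum kv m), innerZ (G j) w ≠ 0 ∧ v = G i + G j} ∪
           {v | ∃ t : Fin (psum kv m), innerZ (G t) w = 0 ∧ v = G t} ∪ {w}) :=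
        AddSubgroup.subset_closure (Or.inl (Or.inl ⟨l, hl, rfl⟩))
      have h2 : G i + G j ∈ AddSubgroup.closure
          ({v | ∃ j : Fin (psum kv m), innerZ (G j) w ≠ 0 ∧ v = G i + G j} ∪
           {v | ∃ t : Fin (psum kv m), innerZ (G t) w = 0 ∧ v = G t} ∪ {w}) :=
        AddSubgroup.subset_closure (Or.inl (Or.inl ⟨j, hj, rfl⟩))
      have h3 : G i + G i ∈ AddSubgroup.closure
          ({v | ∃ j : Fin (psum kv m), innerZ (G j) w ≠ 0 ∧ v = G i + G j} ∪
           {v | ∃ t : Fin (psum kv m), innerZ (G t) w = 0 ∧ v = G t} ∪ {w}) :=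
        AddSubgroup.subset_closure (Or.inl (Or.inl ⟨i, hi, rfl⟩))
      have heq : G l + G j = (G i + G l) + (G i + G j) - (G i + G i) := by abel
      have := AddSubgroup.sub_mem _ (AddSubgroup.add_mem _ h1 h2) h3
      rw [heq]
      exact this
    · exact AddSubgroup.subset_closure (Or.inl (Or.inr hB))
    · exact AddSubgroup.subset_closure (Or.inr hw)
  exact le_antisymm (key l i hl hi) (key i l hi hl)
end

section
/- Let n ≥ 1 and let C be a Z_8-code of length n whose Z_4-residue code C^{(4)} has minimum Euclidean weight at least 16 over its nonzero codewords. Let w ∈ (Z/8)^n be a vector with (w mod 4) ∈ C^{(4)} and wt_E(w) = 16. Then exactly one of the following holds: (i) wt_E(w mod 4) = 16 and n_3(w) = n_4(w) = n_5(w) = 0; (ii) every coordinate of w is 0 or 4, and n_4(w) = 1. -/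
open Finset

private def r4' (a : ZMod 8) : ZMod 4 := ZMod.castHom (by norm_num : (4:ℕ) ∣ 8) (ZMod 4) a
private def f8' (a : ZMod 8) : ℕ := min (a.val ^ 2) ((8 - a.val) ^ 2)
private def f4' (b : ZMod 4) : ℕ := min (b.val ^ 2) ((4 - b.val) ^ 2)

private lemma aux_le : ∀ a : ZMod 8, f4' (r4' a) ≤ f8' a := by decide
private lemma aux_eq : ∀ a : ZMod 8, f4' (r4' a) = f8' a → a ≠ 3 ∧ a ≠ 4 ∧ a ≠ 5 := by decide
private lemma aux_zero : ∀ a : ZMod 8, r4' a = 0 → a = 0 ∨ a = 4 := by decide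

/-- a vector `w` with `(w mod 4) ∈ C⁽⁴⁾` and `wt_E(w) = 16`
satisfies exactly one of the two alternatives. -/
theorem weight16_dichotomy {n : ℕ} (hn : 1 ≤ n)
    (C : AddSubgroup (Fin n → ZMod 8))
    (hres : ∀ y ∈ C.map res4, y ≠ 0 → 16 ≤ euclWt y)
    (w : Fin n → ZMod 8) (hw4 : res4 w ∈ C.map res4)
    (hwt : euclWt w = 16) :
    Xor'
      (euclWt (res4 w) = 16 ∧ cntEq (3 : ZMod 8) w = 0 ∧ cntEq (4 : ZMod 8) w = 0 ∧
        cntEq (5 : ZMod 8) w = 0)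
      ((∀ i, w i = 0 ∨ w i = 4) ∧ cntEq (4 : ZMod 8) w = 1) := by
  have key : euclWt (res4 w) = ∑ i, f4' (r4' (w i)) := rfl
  have keyw : euclWt w = ∑ i, f8' (w i) := rfl
  by_cases h0 : res4 w = 0
  · -- all coordinates are 0 or 4
    have hcoord : ∀ i, w i = 0 ∨ w i = 4 := by
      intro i
      exact aux_zero (w i) (congrFun h0 i)
    have hsum : euclWt w = (Finset.univ.filter fun j => w j = (4 : ZMod 8)).card * 16 := by
      rw [keyw]
      have : ∀ i ∈ Finset.univ, f8' (w i) = if w i = (4 : ZMod 8) then 16 else 0 := by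
        intro i _
        rcases hcoord i with h | h <;> rw [h] <;> decide
      rw [Finset.sum_congr rfl this, ← Finset.sum_filter, Finset.sum_const, smul_eq_mul]
    have hc1 : cntEq (4 : ZMod 8) w = 1 := by
      have : (Finset.univ.filter fun j => w j = (4 : ZMod 8)).card * 16 = 16 := by
        rw [← hsum, hwt]
      unfold cntEq
      omega
    refine Or.inr ⟨⟨hcoord, hc1⟩, fun h => ?_⟩
    have := h.2.2.1
    rw [this] at hc1
    exact one_ne_zero hc1.symm
  · -- residue is nonzero, so its weight is at least 16
    have hge : 16 ≤ euclWt (res4 w) := hres (res4 w) hw4 h0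
    have hle : ∀ i ∈ Finset.univ, f4' (r4' (w i)) ≤ f8' (w i) := fun i _ => aux_le (w i)
    have hle' : euclWt (res4 w) ≤ 16 := by
      rw [key, ← hwt, keyw]
      exact Finset.sum_le_sum hle
    have heq : euclWt (res4 w) = 16 := le_antisymm hle' hge
    have hterm : ∀ i ∈ Finset.univ, f4' (r4' (w i)) = f8' (w i) := by
      rw [← Finset.sum_eq_sum_iff_of_le hle, ← key, ← keyw, heq, hwt]
    have hno : ∀ i, w i ≠ 3 ∧ w i ≠ 4 ∧ w i ≠ 5 := fun i =>
      aux_eq (w i) (hterm i (Finset.mem_univ i))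
    have hc3 : cntEq (3 : ZMod 8) w = 0 := by
      unfold cntEq
      rw [Finset.card_eq_zero, Finset.filter_eq_empty_iff]
      exact fun i _ => (hno i).1
    have hc4 : cntEq (4 : ZMod 8) w = 0 := by
      unfold cntEq
      rw [Finset.card_eq_zero, Finset.filter_eq_empty_iff]
      exact fun i _ => (hno i).2.1
    have hc5 : cntEq (5 : ZMod 8) w = 0 := by
      unfold cntEq
      rw [Finset.card_eq_zero, Finset.filter_eq_empty_iff]
      exact fun i _ => (hno i).2.2
    refine Or.inl ⟨⟨heq, hc3, hc4, hc5⟩, fun h => ?_⟩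
    rw [h.2] at hc4
    exact one_ne_zero hc4
end
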